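/- arXiv:math/0008137 — 3 statements merged into one kernel-verified Lean document; each statement's English description precedes it below -/
import Mathlib

section
/- Let γ : [0,1] → ℝ³ \ {0} be a C^∞ map with γ(t) and γ'(t) linearly independent for every t, with γ(s) and γ(t) linearly dependent only if s = t, and with h(t) = det(γ(t), γ'(t), γ''(t)) ≠ 0 for all t ∈ [0,1] (an arc in the projective plane free of inflection points). Assume the arc is free of sextactic points: there is no t₀ ∈ [0,1] and nonzero quadratic form Q on ℝ³ such that t ↦ Q(γ(t)) vanishes to order at least 6 at t₀. Then the osculating conics at distinct points do not meet: for all s ≠ t in [0,1], if Q_s and Q_t are nonzero quadratic forms on ℝ³ such that Q_s(γ(·)) vanishes to order at least 5 at s and Q_t(γ(·)) vanishes to order at least 5 at t, then {v ∈ ℝ³ : Q_s(v) = 0} ∩ {v ∈ ℝ³ : Q_t(v) = 0} = {0}. -/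
noncomputable section

/-- We model ℝ³ as `Fin 3 → ℝ`. -/
abbrev V3 := Fin 3 → ℝ

/-- Determinant of three vectors in ℝ³. -/
def det3 (u v w : V3) : ℝ := Matrix.det (Matrix.of ![u, v, w])

/-- `hdet γ t = det(γ(t), γ'(t), γ''(t))`. -/
def hdet (γ : ℝ → V3) (t : ℝ) : ℝ := det3 (γ t) (deriv γ t) (deriv (deriv γ) t)

/-- A real function vanishes to order at least `k` at `t₀` if its value and
first `k-1` derivatives vanish there. -/
def VanishesToOrder (f : ℝ → ℝ) (k : ℕ) (t₀ : ℝ) : Prop :=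
  ∀ j < k, iteratedDeriv j f t₀ = 0

/-!
A conic is the preimage under the Veronese map of a hyperplane of `ℝ⁶`, so the osculating conic
at `u` is cut out by the normal `N u` of the osculating hyperplane of the curve `veronese ∘ γ`
(a column of the adjugate of its Wronskian matrix); the absence of sextactic points says that
this Wronskian `W` never vanishes. Differentiating the defining relations gives
`N' = a ℓᵤ² + b N`, where `ℓᵤ` is the tangent line at `u` and `a = -W / (6 h²)` has constant
sign. For a point `v` on the osculating conics at `s < t`, the function
`g = ⟨veronese v, N⟩` then solves `g' = a ℓᵤ(v)² + b g` and vanishes at `s` and `t`, which forces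
`ℓᵤ(v) = 0` on `(s, t)`. A point on all these tangent lines equals `γ u` projectively for every
`u ∈ (s, t)`, which is impossible on a simple arc.
-/

open Matrix Set Filter Topology
open scoped ContDiff

theorem triple_product_smul_eq (a b c v : V3) :
    (c ⬝ᵥ a ⨯₃ b) • v = (v ⬝ᵥ b ⨯₃ c) • a - (v ⬝ᵥ a ⨯₃ c) • b + (v ⬝ᵥ a ⨯₃ b) • c := by
  ext i
  fin_cases i <;> simp [cross_apply, dotProduct, Fin.sum_univ_succ] <;> ring

section Calculus

theorem HasDerivAt.dotProduct {ι : Type*} [Fintype ι] {f g : ℝ → ι → ℝ} {f' g' : ι → ℝ}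
    {x : ℝ} (hf : HasDerivAt f f' x) (hg : HasDerivAt g g' x) :
    HasDerivAt (fun y => f y ⬝ᵥ g y) (f' ⬝ᵥ g x + f x ⬝ᵥ g') x := by
  rw [hasDerivAt_pi] at hf hg
  have h := HasDerivAt.fun_sum (u := Finset.univ) fun i _ => (hf i).fun_mul (hg i)
  rwa [Finset.sum_add_distrib] at h

theorem HasDerivAt.crossProduct {f g : ℝ → Fin 3 → ℝ} {f' g' : Fin 3 → ℝ} {x : ℝ}
    (hf : HasDerivAt f f' x) (hg : HasDerivAt g g' x) :
    HasDerivAt (fun y => f y ⨯₃ g y) (f' ⨯₃ g x + f x ⨯₃ g') x := by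
  rw [hasDerivAt_pi] at hf hg ⊢
  have key : ∀ i j, HasDerivAt (fun y => f y i * g y j - f y j * g y i)
      (f' i * g x j - f' j * g x i + (f x i * g' j - f x j * g' i)) x := fun i j =>
    (((hf i).fun_mul (hg j)).fun_sub ((hf j).fun_mul (hg i))).congr_deriv (by ring)
  intro i
  fin_cases i
  · exact key 1 2
  · exact key 2 0
  · exact key 0 1

variable {E : Type*} [NormedAddCommGroup E] [NormedSpace ℝ E] {f : ℝ → E}

theorem ContDiff.iteratedDeriv (hf : ContDiff ℝ ∞ f) (j : ℕ) :
    ContDiff ℝ ∞ (iteratedDeriv j f) := by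
  rw [iteratedDeriv_eq_iterate]
  exact hf.iterate_deriv j

theorem hasDerivAt_iteratedDeriv (hf : ContDiff ℝ ∞ f) (j : ℕ) (x : ℝ) :
    HasDerivAt (iteratedDeriv j f) (iteratedDeriv (j + 1) f x) x := by
  rw [iteratedDeriv_succ]
  exact ((hf.iteratedDeriv j).differentiable (by simp)).differentiableAt.hasDerivAt

theorem iteratedDeriv_dotProduct_const {ι : Type*} [Fintype ι] {W : ℝ → ι → ℝ}
    (hW : ContDiff ℝ ∞ W) (q : ι → ℝ) (j : ℕ) :
    iteratedDeriv j (fun x => W x ⬝ᵥ q) = fun x => iteratedDeriv j W x ⬝ᵥ q := by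
  induction j with
  | zero => simp
  | succ j ih =>
    ext x
    rw [iteratedDeriv_succ, ih]
    simpa using ((hasDerivAt_iteratedDeriv hW j x).dotProduct (hasDerivAt_const x q)).deriv

theorem contDiff_det {ι : Type*} [Fintype ι] [DecidableEq ι] {A : ℝ → Matrix ι ι ℝ} {k : ℕ∞ω}
    (hA : ∀ i j, ContDiff ℝ k fun u => A u i j) : ContDiff ℝ k fun u => (A u).det := by
  simp only [det_apply']
  exact ContDiff.sum fun σ _ => contDiff_const.mul (contDiff_prod fun i _ => hA (σ i) i)

theorem iteratedDeriv_sq_of_eq_zero {F : ℝ → ℝ} (hF : ContDiff ℝ ∞ F) {u : ℝ} (h0 : F u = 0)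
    (h1 : deriv F u = 0) :
    (∀ j < 4, iteratedDeriv j (fun x => F x ^ 2) u = 0) ∧
      iteratedDeriv 4 (fun x => F x ^ 2) u = 6 * iteratedDeriv 2 F u ^ 2 := by
  have leibniz (j : ℕ) := iteratedDeriv_fun_mul (n := j) (x := u) (f := F) (g := F)
    (hF.of_le (mod_cast le_top)).contDiffAt (hF.of_le (mod_cast le_top)).contDiffAt
  simp only [sq]
  refine ⟨fun j hj => ?_, ?_⟩
  · interval_cases j <;> simp [leibniz, Finset.sum_range_succ, h0, h1]
  · simp [leibniz, Finset.sum_range_succ, h0, h1, Nat.choose]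
    ring

/-- `exp (-∫ b) * g` is monotone on `[s, t]` and vanishes at both ends. -/
theorem eqOn_zero_of_hasDerivAt_add_mul {g r b : ℝ → ℝ} {s t : ℝ} (hst : s ≤ t)
    (hb : ContinuousOn b (Icc s t)) (hg : ∀ u ∈ Icc s t, HasDerivAt g (r u + b u * g u) u)
    (hr : ∀ u ∈ Icc s t, 0 ≤ r u) (hgs : g s = 0) (hgt : g t = 0) : EqOn r 0 (Ioo s t) := by
  set b' := IccExtend hst ((Icc s t).domRestrict b)
  set B : ℝ → ℝ := fun u => ∫ x in s..u, b' x
  set H : ℝ → ℝ := fun u => Real.exp (-B u) * g u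
  have hH : ∀ u ∈ Icc s t, HasDerivAt H (Real.exp (-B u) * r u) u := by
    intro u hu
    have hB : HasDerivAt B (b' u) u :=
      (hb.domRestrict.Icc_extend'.integral_hasStrictDerivAt s u).hasDerivAt
    rw [show b' u = b u from IccExtend_of_mem hst _ hu] at hB
    exact ((hB.fun_neg.exp).mul (hg u hu)).congr_deriv (by ring)
  have hmono : MonotoneOn H (Icc s t) :=
    monotoneOn_of_hasDerivWithinAt_nonneg (convex_Icc s t)
      (fun u hu => (hH u hu).continuousAt.continuousWithinAt)
      (fun u hu => (hH u (interior_subset hu)).hasDerivWithinAt)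
      (fun u hu => mul_nonneg (Real.exp_pos _).le (hr u (interior_subset hu)))
  have hH0 : EqOn H 0 (Icc s t) := fun u hu => by
    have h1 := hmono ⟨le_rfl, hst⟩ hu hu.1
    have h2 := hmono hu ⟨hst, le_rfl⟩ hu.2
    simp only [H, hgs, hgt, mul_zero] at h1 h2
    exact le_antisymm h2 h1
  intro u hu
  have hloc : H =ᶠ[𝓝 u] fun _ => 0 :=
    eventually_of_mem (Ioo_mem_nhds hu.1 hu.2) fun x hx => hH0 (Ioo_subset_Icc_self hx)
  have := (hH u (Ioo_subset_Icc_self hu)).unique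
    ((hasDerivAt_const u (0 : ℝ)).congr_of_eventuallyEq hloc)
  simpa [(Real.exp_pos _).ne'] using this

theorem IsPreconnected.forall_pos_or_forall_neg {s : Set ℝ} (hs : IsPreconnected s)
    {f : ℝ → ℝ} (hf : ContinuousOn f s) (h0 : ∀ x ∈ s, f x ≠ 0) :
    (∀ x ∈ s, 0 < f x) ∨ ∀ x ∈ s, f x < 0 := by
  by_contra! h
  obtain ⟨⟨x, hx, hfx⟩, y, hy, hfy⟩ := h
  obtain ⟨z, hz, hfz⟩ := hs.intermediate_value hx hy hf ⟨hfx, hfy⟩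
  exact h0 z hz hfz

end Calculus

section Wronskian

variable {n : ℕ}

def wronskianMatrix (W : ℝ → Fin (n + 1) → ℝ) (u : ℝ) :
    Matrix (Fin (n + 1)) (Fin (n + 1)) ℝ :=
  of fun j => iteratedDeriv j W u

def wronskian (W : ℝ → Fin (n + 1) → ℝ) (u : ℝ) : ℝ := (wronskianMatrix W u).det

/-- A normal vector of the osculating hyperplane, spanned by `W u, …, W⁽ⁿ⁻¹⁾ u`. -/
def osculatingNormal (W : ℝ → Fin (n + 1) → ℝ) (u : ℝ) : Fin (n + 1) → ℝ :=
  fun i => adjugate (wronskianMatrix W u) i (Fin.last n)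

variable {W : ℝ → Fin (n + 1) → ℝ}

theorem iteratedDeriv_dotProduct_osculatingNormal (u : ℝ) (j : Fin (n + 1)) :
    iteratedDeriv j W u ⬝ᵥ osculatingNormal W u =
      if j = Fin.last n then wronskian W u else 0 := by
  have h := congr_fun₂ (mul_adjugate (wronskianMatrix W u)) j (Fin.last n)
  rw [mul_apply, Matrix.smul_apply, one_apply, smul_eq_mul, mul_ite, mul_one, mul_zero] at h
  exact h

theorem iteratedDeriv_dotProduct_osculatingNormal_of_lt (u : ℝ) {j : ℕ} (hj : j < n) :
    iteratedDeriv j W u ⬝ᵥ osculatingNormal W u = 0 := by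
  simpa [Fin.ext_iff, hj.ne] using
    iteratedDeriv_dotProduct_osculatingNormal (W := W) u ⟨j, by omega⟩

theorem iteratedDeriv_dotProduct_osculatingNormal_self (u : ℝ) :
    iteratedDeriv n W u ⬝ᵥ osculatingNormal W u = wronskian W u := by
  simpa using iteratedDeriv_dotProduct_osculatingNormal (W := W) u (Fin.last n)

theorem eq_of_iteratedDeriv_dotProduct_eq {u : ℝ} (hD : wronskian W u ≠ 0)
    {x y : Fin (n + 1) → ℝ}
    (h : ∀ j ≤ n, iteratedDeriv j W u ⬝ᵥ x = iteratedDeriv j W u ⬝ᵥ y) : x = y := by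
  refine mulVec_injective_iff_isUnit.2 ((isUnit_iff_isUnit_det _).2 (isUnit_iff_ne_zero.2 hD)) ?_
  ext j
  exact h j (Nat.lt_succ_iff.1 j.2)

theorem exists_eq_smul_osculatingNormal {u : ℝ} (hD : wronskian W u ≠ 0) {q : Fin (n + 1) → ℝ}
    (hq : ∀ j < n, iteratedDeriv j W u ⬝ᵥ q = 0) : ∃ c : ℝ, q = c • osculatingNormal W u := by
  refine ⟨(iteratedDeriv n W u ⬝ᵥ q) / wronskian W u, eq_of_iteratedDeriv_dotProduct_eq hD ?_⟩
  intro j hj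
  rw [dotProduct_smul, smul_eq_mul]
  rcases hj.lt_or_eq with hj | rfl
  · rw [hq j hj, iteratedDeriv_dotProduct_osculatingNormal_of_lt u hj, mul_zero]
  · rw [iteratedDeriv_dotProduct_osculatingNormal_self, div_mul_cancel₀ _ hD]

theorem exists_ne_zero_iteratedDeriv_dotProduct_eq_zero {u : ℝ} (hD : wronskian W u = 0) :
    ∃ q ≠ 0, ∀ j ≤ n, iteratedDeriv j W u ⬝ᵥ q = 0 := by
  obtain ⟨q, hq, hWq⟩ := exists_mulVec_eq_zero_iff.2 hD
  exact ⟨q, hq, fun j hj => congr_fun hWq ⟨j, Nat.lt_succ_iff.2 hj⟩⟩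

variable (hW : ContDiff ℝ ∞ W)
include hW

theorem contDiff_wronskianMatrix_apply (j i : Fin (n + 1)) :
    ContDiff ℝ ∞ fun u => wronskianMatrix W u j i :=
  contDiff_pi.1 (hW.iteratedDeriv j) i

theorem contDiff_wronskian : ContDiff ℝ ∞ (wronskian W) :=
  contDiff_det (contDiff_wronskianMatrix_apply hW)

theorem contDiff_osculatingNormal : ContDiff ℝ ∞ (osculatingNormal W) := by
  refine contDiff_pi.2 fun i => ?_
  simp only [osculatingNormal, adjugate_apply]
  refine contDiff_det fun a b => ?_
  by_cases ha : a = Fin.last n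
  · simp only [ha, updateRow_self]
    exact contDiff_const
  · simp only [updateRow_ne ha]
    exact contDiff_wronskianMatrix_apply hW a b

theorem iteratedDeriv_dotProduct_deriv_osculatingNormal (u : ℝ) {j : ℕ} (hj : j < n) :
    iteratedDeriv j W u ⬝ᵥ deriv (osculatingNormal W) u =
      -(iteratedDeriv (j + 1) W u ⬝ᵥ osculatingNormal W u) := by
  have hN := ((contDiff_osculatingNormal hW).differentiable (by simp) u).hasDerivAt
  have h := (hasDerivAt_iteratedDeriv hW j u).dotProduct hN
  have h0 : (fun x => iteratedDeriv j W x ⬝ᵥ osculatingNormal W x) = fun _ => 0 :=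
    funext fun x => iteratedDeriv_dotProduct_osculatingNormal_of_lt x hj
  rw [h0] at h
  linarith [h.unique (hasDerivAt_const u 0)]

end Wronskian

section Veronese

/-- The monomials are ordered `x₀², x₁², x₂², x₀x₁, x₀x₂, x₁x₂`. -/
def veronese (x : V3) : Fin 6 → ℝ :=
  ![x 0 * x 0, x 1 * x 1, x 2 * x 2, x 0 * x 1, x 0 * x 2, x 1 * x 2]

def sqCoeffs (c : V3) : Fin 6 → ℝ :=
  ![c 0 * c 0, c 1 * c 1, c 2 * c 2, 2 * (c 0 * c 1), 2 * (c 0 * c 2), 2 * (c 1 * c 2)]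

theorem contDiff_veronese : ContDiff ℝ ∞ veronese := by
  refine contDiff_pi.2 fun i => ?_
  fin_cases i <;> simp [veronese] <;> fun_prop

theorem continuous_sqCoeffs : Continuous sqCoeffs := by
  refine continuous_pi fun i => ?_
  fin_cases i <;> simp [sqCoeffs] <;> fun_prop

theorem veronese_dotProduct_sqCoeffs (x c : V3) : veronese x ⬝ᵥ sqCoeffs c = (x ⬝ᵥ c) ^ 2 := by
  simp [veronese, sqCoeffs, dotProduct, Fin.sum_univ_succ]
  ring

theorem QuadraticForm.exists_eq_veronese_dotProduct (Q : QuadraticForm ℝ V3) :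
    ∃ q, ∀ v, Q v = veronese v ⬝ᵥ q := by
  obtain ⟨A, hA⟩ : ∃ A : Matrix (Fin 3) (Fin 3) ℝ, ∀ v, Q v = v ⬝ᵥ A *ᵥ v :=
    ⟨Q.toMatrix', fun v => by
      rw [← QuadraticMap.associated_eq_self_apply ℝ Q v, QuadraticForm.toMatrix',
        ← Matrix.toLinearMap₂'_apply', Matrix.toLinearMap₂'_toMatrix']⟩
  refine ⟨![A 0 0, A 1 1, A 2 2, A 0 1 + A 1 0, A 0 2 + A 2 0, A 1 2 + A 2 1], fun v => ?_⟩
  rw [hA]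
  simp [veronese, dotProduct, mulVec, Fin.sum_univ_succ]
  ring

theorem exists_quadraticForm_eq_veronese_dotProduct (q : Fin 6 → ℝ) :
    ∃ Q : QuadraticForm ℝ V3, ∀ v, Q v = veronese v ⬝ᵥ q := by
  refine ⟨(!![q 0, q 3, q 4; 0, q 1, q 5; 0, 0, q 2]).toQuadraticForm', fun v => ?_⟩
  simp [Matrix.toQuadraticForm', Matrix.toLinearMap₂'_apply', veronese, dotProduct, mulVec,
    Fin.sum_univ_succ]
  ring

theorem eq_zero_of_forall_veronese_dotProduct_eq_zero {q : Fin 6 → ℝ}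
    (h : ∀ v, veronese v ⬝ᵥ q = 0) : q = 0 := by
  have e (a b c : ℝ) := h ![a, b, c]
  simp [veronese, dotProduct, Fin.sum_univ_succ] at e
  ext i
  fin_cases i <;> simp <;> linarith [e 1 0 0, e 0 1 0, e 0 0 1, e 1 1 0, e 1 0 1, e 0 1 1]

end Veronese

section Curve

variable {γ : ℝ → V3}

def tangentLine (γ : ℝ → V3) (u : ℝ) : V3 := γ u ⨯₃ deriv γ u

def osculatingConic (γ : ℝ → V3) (u : ℝ) : Set V3 :=
  {v | veronese v ⬝ᵥ osculatingNormal (veronese ∘ γ) u = 0}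

theorem hdet_eq_dotProduct_tangentLine (γ : ℝ → V3) (u : ℝ) :
    hdet γ u = deriv (deriv γ) u ⬝ᵥ tangentLine γ u := by
  rw [tangentLine, triple_product_permutation, triple_product_eq_det]
  rfl

/-- The coefficients of `deriv_osculatingNormal_veronese`, read off by pairing with the fourth
and fifth derivatives of `veronese ∘ γ`. -/
def tangentCoeff (γ : ℝ → V3) (u : ℝ) : ℝ := -wronskian (veronese ∘ γ) u / (6 * hdet γ u ^ 2)

def normalCoeff (γ : ℝ → V3) (u : ℝ) : ℝ :=
  (iteratedDeriv 5 (veronese ∘ γ) u ⬝ᵥ deriv (osculatingNormal (veronese ∘ γ)) u -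
      tangentCoeff γ u * (iteratedDeriv 5 (veronese ∘ γ) u ⬝ᵥ sqCoeffs (tangentLine γ u))) /
    wronskian (veronese ∘ γ) u

theorem tangentCoeff_ne_zero {u : ℝ} (hD : wronskian (veronese ∘ γ) u ≠ 0) (hh : hdet γ u ≠ 0) :
    tangentCoeff γ u ≠ 0 :=
  div_ne_zero (neg_ne_zero.2 hD) (by positivity)

theorem eq_smul_of_dotProduct_tangentLine_eq_zero {u : ℝ} (hh : hdet γ u ≠ 0) {v : V3}
    (h₁ : v ⬝ᵥ tangentLine γ u = 0) (h₂ : v ⬝ᵥ γ u ⨯₃ deriv (deriv γ) u = 0) :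
    v = (v ⬝ᵥ deriv γ u ⨯₃ deriv (deriv γ) u / hdet γ u) • γ u := by
  have h := triple_product_smul_eq (γ u) (deriv γ u) (deriv (deriv γ) u) v
  rw [← tangentLine, ← hdet_eq_dotProduct_tangentLine, h₁, h₂, zero_smul, zero_smul, sub_zero,
    add_zero] at h
  rw [div_eq_inv_mul, mul_smul, ← h, inv_smul_smul₀ hh]

variable (hγ : ContDiff ℝ ∞ γ)
include hγ

theorem hasDerivAt_tangentLine (u : ℝ) :
    HasDerivAt (tangentLine γ) (γ u ⨯₃ deriv (deriv γ) u) u := by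
  have hγ' : ContDiff ℝ ∞ (deriv γ) := hγ.iterate_deriv 1
  have h := (hγ.differentiable (by simp) u).hasDerivAt.crossProduct
    (hγ'.differentiable (by simp) u).hasDerivAt
  rwa [cross_self, zero_add] at h

theorem continuous_tangentLine : Continuous (tangentLine γ) :=
  continuous_iff_continuousAt.2 fun u => (hasDerivAt_tangentLine hγ u).continuousAt

theorem continuous_hdet : Continuous (hdet γ) := by
  simp only [funext (hdet_eq_dotProduct_tangentLine γ)]
  exact ((hγ.iterate_deriv 2).continuous).dotProduct (continuous_tangentLine hγ)

theorem iteratedDeriv_veronese_dotProduct_sqCoeffs_tangentLine (u : ℝ) :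
    (∀ j < 4, iteratedDeriv j (veronese ∘ γ) u ⬝ᵥ sqCoeffs (tangentLine γ u) = 0) ∧
      iteratedDeriv 4 (veronese ∘ γ) u ⬝ᵥ sqCoeffs (tangentLine γ u) = 6 * hdet γ u ^ 2 := by
  set ℓ := tangentLine γ u
  have hF (j : ℕ) : iteratedDeriv j (fun x => γ x ⬝ᵥ ℓ) u = iteratedDeriv j γ u ⬝ᵥ ℓ :=
    congrFun (iteratedDeriv_dotProduct_const hγ ℓ j) u
  have hsq (j : ℕ) : iteratedDeriv j (veronese ∘ γ) u ⬝ᵥ sqCoeffs ℓ =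
      iteratedDeriv j (fun x => (γ x ⬝ᵥ ℓ) ^ 2) u := by
    have h := congrFun (iteratedDeriv_dotProduct_const (contDiff_veronese.comp hγ) (sqCoeffs ℓ) j) u
    simp only [Function.comp_apply, veronese_dotProduct_sqCoeffs] at h
    exact h.symm
  have hF0 : γ u ⬝ᵥ ℓ = 0 := dot_self_cross _ _
  have hF1 : deriv (fun x => γ x ⬝ᵥ ℓ) u = 0 := by
    rw [← iteratedDeriv_one, hF, iteratedDeriv_one]
    exact dot_cross_self _ _
  have hF2 : iteratedDeriv 2 (fun x => γ x ⬝ᵥ ℓ) u = hdet γ u := by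
    rw [hF, iteratedDeriv_succ, iteratedDeriv_one, hdet_eq_dotProduct_tangentLine]
  obtain ⟨hlow, h4⟩ := iteratedDeriv_sq_of_eq_zero (F := fun x => γ x ⬝ᵥ ℓ)
    (ContDiff.sum fun i _ => (contDiff_pi.1 hγ i).mul contDiff_const) hF0 hF1
  exact ⟨fun j hj => (hsq j).trans (hlow j hj), by rw [hsq, h4, hF2]⟩

theorem deriv_osculatingNormal_veronese {u : ℝ} (hD : wronskian (veronese ∘ γ) u ≠ 0)
    (hh : hdet γ u ≠ 0) :
    deriv (osculatingNormal (veronese ∘ γ)) u =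
      tangentCoeff γ u • sqCoeffs (tangentLine γ u) +
        normalCoeff γ u • osculatingNormal (veronese ∘ γ) u := by
  have hW := contDiff_veronese.comp hγ
  obtain ⟨hm, hm4⟩ := iteratedDeriv_veronese_dotProduct_sqCoeffs_tangentLine hγ u
  refine eq_of_iteratedDeriv_dotProduct_eq hD fun j hj => ?_
  rw [dotProduct_add, dotProduct_smul, dotProduct_smul, smul_eq_mul, smul_eq_mul]
  obtain hj | rfl | rfl : j < 4 ∨ j = 4 ∨ j = 5 := by omega
  · rw [iteratedDeriv_dotProduct_deriv_osculatingNormal hW u (by omega),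
      iteratedDeriv_dotProduct_osculatingNormal_of_lt u (by omega : j + 1 < 5), hm j hj,
      iteratedDeriv_dotProduct_osculatingNormal_of_lt u (by omega : j < 5)]
    ring
  · rw [iteratedDeriv_dotProduct_deriv_osculatingNormal hW u (by omega),
      iteratedDeriv_dotProduct_osculatingNormal_self, hm4,
      iteratedDeriv_dotProduct_osculatingNormal_of_lt u (by omega : 4 < 5), tangentCoeff]
    field_simp
    ring
  · rw [iteratedDeriv_dotProduct_osculatingNormal_self, normalCoeff, div_mul_cancel₀ _ hD]
    ring

theorem continuousOn_tangentCoeff {S : Set ℝ} (hh : ∀ u ∈ S, hdet γ u ≠ 0) :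
    ContinuousOn (tangentCoeff γ) S :=
  (contDiff_wronskian (contDiff_veronese.comp hγ)).continuous.continuousOn.neg.div
    (continuous_const.mul ((continuous_hdet hγ).pow 2)).continuousOn
    fun u hu => by have := hh u hu; positivity

theorem continuousOn_normalCoeff {S : Set ℝ} (hD : ∀ u ∈ S, wronskian (veronese ∘ γ) u ≠ 0)
    (hh : ∀ u ∈ S, hdet γ u ≠ 0) : ContinuousOn (normalCoeff γ) S := by
  have hW := contDiff_veronese.comp hγ
  have hW5 : Continuous (iteratedDeriv 5 (veronese ∘ γ)) := (hW.iteratedDeriv 5).continuous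
  have hN' : Continuous (deriv (osculatingNormal (veronese ∘ γ))) :=
    ((contDiff_osculatingNormal hW).iterate_deriv 1).continuous
  refine ContinuousOn.div ?_ (contDiff_wronskian hW).continuous.continuousOn hD
  exact (hW5.dotProduct hN').continuousOn.sub ((continuousOn_tangentCoeff hγ hh).mul
    (hW5.dotProduct (continuous_sqCoeffs.comp (continuous_tangentLine hγ))).continuousOn)

theorem dotProduct_tangentLine_eq_zero_of_mem_osculatingConic {s t : ℝ} (hst : s ≤ t)
    (hD : ∀ u ∈ Icc s t, wronskian (veronese ∘ γ) u ≠ 0) (hh : ∀ u ∈ Icc s t, hdet γ u ≠ 0)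
    {v : V3} (hvs : v ∈ osculatingConic γ s) (hvt : v ∈ osculatingConic γ t) :
    ∀ u ∈ Ioo s t, v ⬝ᵥ tangentLine γ u = 0 := by
  set g := fun u => veronese v ⬝ᵥ osculatingNormal (veronese ∘ γ) u
  set r := fun u => tangentCoeff γ u * (v ⬝ᵥ tangentLine γ u) ^ 2
  have hg : ∀ u ∈ Icc s t, HasDerivAt g (r u + normalCoeff γ u * g u) u := by
    intro u hu
    have hN := ((contDiff_osculatingNormal (contDiff_veronese.comp hγ)).differentiable
      (by simp) u).hasDerivAt
    convert (hasDerivAt_const u (veronese v)).dotProduct hN using 1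
    rw [deriv_osculatingNormal_veronese hγ (hD u hu) (hh u hu), dotProduct_add, dotProduct_smul,
      dotProduct_smul, veronese_dotProduct_sqCoeffs]
    simp [r, g]
  have hr0 : EqOn r 0 (Ioo s t) := by
    rcases isPreconnected_Icc.forall_pos_or_forall_neg (continuousOn_tangentCoeff hγ hh)
      (fun u hu => tangentCoeff_ne_zero (hD u hu) (hh u hu)) with hpos | hneg
    · exact eqOn_zero_of_hasDerivAt_add_mul hst (continuousOn_normalCoeff hγ hD hh) hg
        (fun u hu => mul_nonneg (hpos u hu).le (sq_nonneg _)) hvs hvt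
    · have h := eqOn_zero_of_hasDerivAt_add_mul (g := -g) (r := -r) hst
        (continuousOn_normalCoeff hγ hD hh)
        (fun u hu => ((hg u hu).neg).congr_deriv (by simp; ring))
        (fun u hu => neg_nonneg.2 (mul_nonpos_of_nonpos_of_nonneg (hneg u hu).le (sq_nonneg _)))
        (by simp [g, hvs.out]) (by simp [g, hvt.out])
      exact fun u hu => neg_eq_zero.1 (h hu)
  intro u hu
  have hu' := Ioo_subset_Icc_self hu
  simpa [r, tangentCoeff_ne_zero (hD u hu') (hh u hu')] using hr0 hu

theorem exists_eq_smul_of_eventually_dotProduct_tangentLine_eq_zero {u : ℝ} (hh : hdet γ u ≠ 0)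
    {v : V3} (hv : ∀ᶠ x in 𝓝 u, v ⬝ᵥ tangentLine γ x = 0) : ∃ c : ℝ, v = c • γ u := by
  have h := (hasDerivAt_const u v).dotProduct (hasDerivAt_tangentLine hγ u)
  have h₂ : v ⬝ᵥ γ u ⨯₃ deriv (deriv γ) u = 0 := by
    simpa using h.unique ((hasDerivAt_const u (0 : ℝ)).congr_of_eventuallyEq hv)
  exact ⟨_, eq_smul_of_dotProduct_tangentLine_eq_zero hh hv.self_of_nhds h₂⟩

theorem iteratedDeriv_quadraticForm_comp {Q : QuadraticForm ℝ V3} {q : Fin 6 → ℝ}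
    (hQ : ∀ v, Q v = veronese v ⬝ᵥ q) (j : ℕ) (u : ℝ) :
    iteratedDeriv j (fun x => Q (γ x)) u = iteratedDeriv j (veronese ∘ γ) u ⬝ᵥ q := by
  simp only [hQ]
  exact congrFun (iteratedDeriv_dotProduct_const (contDiff_veronese.comp hγ) q j) u

theorem exists_quadraticForm_vanishesToOrder_six {u : ℝ} (hD : wronskian (veronese ∘ γ) u = 0) :
    ∃ Q : QuadraticForm ℝ V3, Q ≠ 0 ∧ VanishesToOrder (fun x => Q (γ x)) 6 u := by
  obtain ⟨q, hq, hWq⟩ := exists_ne_zero_iteratedDeriv_dotProduct_eq_zero hD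
  obtain ⟨Q, hQ⟩ := exists_quadraticForm_eq_veronese_dotProduct q
  refine ⟨Q, fun h => hq (eq_zero_of_forall_veronese_dotProduct_eq_zero fun v => ?_),
    fun j hj => ?_⟩
  · simp [← hQ, h]
  · rw [iteratedDeriv_quadraticForm_comp hγ hQ]
    exact hWq j (by omega)

theorem setOf_eq_zero_subset_osculatingConic {u : ℝ} (hD : wronskian (veronese ∘ γ) u ≠ 0)
    {Q : QuadraticForm ℝ V3} (hQ : Q ≠ 0) (hQu : VanishesToOrder (fun x => Q (γ x)) 5 u) :
    {v | Q v = 0} ⊆ osculatingConic γ u := by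
  obtain ⟨q, hq⟩ := Q.exists_eq_veronese_dotProduct
  obtain ⟨c, rfl⟩ := exists_eq_smul_osculatingNormal hD fun j hj =>
    (iteratedDeriv_quadraticForm_comp hγ hq j u).symm.trans (hQu j hj)
  have hc : c ≠ 0 := by
    rintro rfl
    exact hQ (QuadraticMap.ext fun w => by simp [hq])
  intro v (hv : Q v = 0)
  rw [hq, dotProduct_smul, smul_eq_mul] at hv
  exact (mul_eq_zero.1 hv).resolve_left hc

theorem eq_zero_of_mem_osculatingConic {s t : ℝ} (hs : s ∈ Icc (0 : ℝ) 1)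
    (ht : t ∈ Icc (0 : ℝ) 1) (hst : s < t)
    (hsimple : ∀ a ∈ Icc (0 : ℝ) 1, ∀ b ∈ Icc (0 : ℝ) 1, ¬ LinearIndependent ℝ ![γ a, γ b] → a = b)
    (hD : ∀ u ∈ Icc (0 : ℝ) 1, wronskian (veronese ∘ γ) u ≠ 0)
    (hh : ∀ u ∈ Icc (0 : ℝ) 1, hdet γ u ≠ 0) {v : V3} (hvs : v ∈ osculatingConic γ s)
    (hvt : v ∈ osculatingConic γ t) : v = 0 := by
  have hsub : Icc s t ⊆ Icc 0 1 := Icc_subset_Icc hs.1 ht.2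
  have hℓ := dotProduct_tangentLine_eq_zero_of_mem_osculatingConic hγ hst.le
    (fun u hu => hD u (hsub hu)) (fun u hu => hh u (hsub hu)) hvs hvt
  have hpt (u : ℝ) (hu : u ∈ Ioo s t) : ∃ c : ℝ, v = c • γ u :=
    exists_eq_smul_of_eventually_dotProduct_tangentLine_eq_zero hγ
      (hh u (hsub (Ioo_subset_Icc_self hu))) (eventually_of_mem (Ioo_mem_nhds hu.1 hu.2) hℓ)
  have hu₀ : (2 * s + t) / 3 ∈ Ioo s t := ⟨by linarith, by linarith⟩
  have hu₁ : (s + 2 * t) / 3 ∈ Ioo s t := ⟨by linarith, by linarith⟩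
  obtain ⟨c₀, hc₀⟩ := hpt _ hu₀
  obtain ⟨c₁, hc₁⟩ := hpt _ hu₁
  by_contra hv
  have hdep : ¬ LinearIndependent ℝ ![γ ((2 * s + t) / 3), γ ((s + 2 * t) / 3)] := by
    rw [LinearIndependent.pair_iff]
    intro h
    have := (h c₀ (-c₁) (by rw [neg_smul, ← hc₀, ← hc₁, add_neg_cancel])).1
    exact hv (by rw [hc₀, this, zero_smul])
  have := hsimple _ (hsub (Ioo_subset_Icc_self hu₀)) _ (hsub (Ioo_subset_Icc_self hu₁)) hdep
  linarith

end Curve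

theorem osculating_conics_disjoint_general
    (γ : ℝ → V3) (hsmooth : ContDiff ℝ (⊤ : ℕ∞) γ)
    (hsimple : ∀ s ∈ Set.Icc (0:ℝ) 1, ∀ t ∈ Set.Icc (0:ℝ) 1,
      ¬ LinearIndependent ℝ ![γ s, γ t] → s = t)
    (hinfl : ∀ t ∈ Set.Icc (0:ℝ) 1, hdet γ t ≠ 0)
    (hnosex : ¬ ∃ t₀ ∈ Set.Icc (0:ℝ) 1, ∃ Q : QuadraticForm ℝ V3, Q ≠ 0 ∧
      VanishesToOrder (fun t => Q (γ t)) 6 t₀) :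
    ∀ s ∈ Set.Icc (0:ℝ) 1, ∀ t ∈ Set.Icc (0:ℝ) 1, s ≠ t →
      ∀ Qs Qt : QuadraticForm ℝ V3, Qs ≠ 0 → Qt ≠ 0 →
        VanishesToOrder (fun u => Qs (γ u)) 5 s →
        VanishesToOrder (fun u => Qt (γ u)) 5 t →
        {v : V3 | Qs v = 0} ∩ {v : V3 | Qt v = 0} = {0} := by
  intro s hs t ht hst Qs Qt hQs hQt hQs5 hQt5
  have hD : ∀ u ∈ Icc (0 : ℝ) 1, wronskian (veronese ∘ γ) u ≠ 0 := fun u hu hDu =>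
    hnosex ⟨u, hu, exists_quadraticForm_vanishesToOrder_six hsmooth hDu⟩
  have hCs := setOf_eq_zero_subset_osculatingConic hsmooth (hD s hs) hQs hQs5
  have hCt := setOf_eq_zero_subset_osculatingConic hsmooth (hD t ht) hQt hQt5
  ext v
  refine ⟨fun ⟨hvs, hvt⟩ => ?_, fun hv => by simp [mem_singleton_iff.1 hv]⟩
  rcases hst.lt_or_gt with h | h
  · exact eq_zero_of_mem_osculatingConic hsmooth hs ht h hsimple hD hinfl (hCs hvs) (hCt hvt)
  · exact eq_zero_of_mem_osculatingConic hsmooth ht hs h hsimple hD hinfl (hCt hvt) (hCs hvs)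

/-- On an arc free of inflection and sextactic points, the osculating conics at
two different points do not meet. -/
theorem osculating_conics_disjoint
    (γ : ℝ → V3) (hsmooth : ContDiff ℝ (⊤ : ℕ∞) γ)
    (hne : ∀ t ∈ Set.Icc (0:ℝ) 1, γ t ≠ 0)
    (hreg : ∀ t ∈ Set.Icc (0:ℝ) 1, LinearIndependent ℝ ![γ t, deriv γ t])
    (hsimple : ∀ s ∈ Set.Icc (0:ℝ) 1, ∀ t ∈ Set.Icc (0:ℝ) 1,
      ¬ LinearIndependent ℝ ![γ s, γ t] → s = t)
    (hinfl : ∀ t ∈ Set.Icc (0:ℝ) 1, hdet γ t ≠ 0)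
    (hnosex : ¬ ∃ t₀ ∈ Set.Icc (0:ℝ) 1, ∃ Q : QuadraticForm ℝ V3, Q ≠ 0 ∧
      VanishesToOrder (fun t => Q (γ t)) 6 t₀) :
    ∀ s ∈ Set.Icc (0:ℝ) 1, ∀ t ∈ Set.Icc (0:ℝ) 1, s ≠ t →
      ∀ Qs Qt : QuadraticForm ℝ V3, Qs ≠ 0 → Qt ≠ 0 →
        VanishesToOrder (fun u => Qs (γ u)) 5 s →
        VanishesToOrder (fun u => Qt (γ u)) 5 t →
        {v : V3 | Qs v = 0} ∩ {v : V3 | Qt v = 0} = {0} :=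
  osculating_conics_disjoint_general γ hsmooth hsimple hinfl hnosex
end
end

section
/- Let a ≠ b in S¹ = ℝ/ℤ and let {F_p}_{p∈[a,b]} be an intrinsic circle system on the closed arc [a,b]. Suppose F_a = F_b and F_a ∩ (a,b) = ∅. Then there exists c ∈ (a,b) such that F_c is connected and F_c ⊆ (a,b). -/
open Filter Topology

noncomputable section

/-- The circle S¹ = ℝ/ℤ. -/
abbrev S1 := AddCircle (1 : ℝ)

/-- The projection ℝ → S¹. -/
def pr (x : ℝ) : S1 := (x : S1)

/-- The closed arc from `a` to `b` (for real representatives `a ≤ b`). -/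
def arcCC (a b : ℝ) : Set S1 := pr '' Set.Icc a b

/-- The half-open arc `[a,b)`. -/
def arcCO (a b : ℝ) : Set S1 := pr '' Set.Ico a b

/-- The half-open arc `(a,b]`. -/
def arcOC (a b : ℝ) : Set S1 := pr '' Set.Ioc a b

/-- The open arc `(a,b)`. -/
def arcOO (a b : ℝ) : Set S1 := pr '' Set.Ioo a b

/-- `I` is an arc of the circle: the image of an interval of positive length
less than 1 (closed, half-open, or open). -/
def IsArc (I : Set S1) : Prop :=
  ∃ a b : ℝ, a < b ∧ b < a + 1 ∧
    (I = arcCC a b ∨ I = arcCO a b ∨ I = arcOC a b ∨ I = arcOO a b)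

/-- `p ≺ q ≺ r` cyclically: the three points admit representatives
`p̃ < q̃ < r̃ < p̃ + 1`. -/
def cyc3 (p q r : S1) : Prop :=
  ∃ a b c : ℝ, pr a = p ∧ pr b = q ∧ pr c = r ∧ a < b ∧ b < c ∧ c < a + 1

/-- `p ≺ q ≺ r ≺ s` cyclically: the four points admit representatives
`p̃ < q̃ < r̃ < s̃ < p̃ + 1`. -/
def cyc4 (p q r s : S1) : Prop :=
  ∃ a b c d : ℝ, pr a = p ∧ pr b = q ∧ pr c = r ∧ pr d = s ∧
    a < b ∧ b < c ∧ c < d ∧ d < a + 1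

/-- `x` is an isolated point of the set `F`. -/
def IsolatedIn (x : S1) (F : Set S1) : Prop :=
  ∃ U : Set S1, IsOpen U ∧ x ∈ U ∧ U ∩ F = {x}

/-- The set `F` has exactly two connected components. -/
def TwoComponents (F : Set S1) : Prop :=
  ∃ x ∈ F, ∃ y ∈ F, connectedComponentIn F x ≠ connectedComponentIn F y ∧
    ∀ z ∈ F, connectedComponentIn F z = connectedComponentIn F x ∨
      connectedComponentIn F z = connectedComponentIn F y

/-- An intrinsic circle system on an index set `I ⊆ S¹`: a family of closed
sets `F p` (for `p ∈ I`) satisfying axioms (I0)–(I3). -/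
structure IsIntrinsicCircleSystem (I : Set S1) (F : S1 → Set S1) : Prop where
  /-- The sets of the family are closed. -/
  isClosed : ∀ p ∈ I, IsClosed (F p)
  /-- (I0) `p ∈ F p`. -/
  mem_self : ∀ p ∈ I, p ∈ F p
  /-- (I1) if `F p` and `F q` meet then they coincide. -/
  eq_of_inter : ∀ p ∈ I, ∀ q ∈ I, (F p ∩ F q).Nonempty → F p = F q
  /-- (I2) if `p' ∈ F p`, `q' ∈ F q` and `p ≺ q ≺ p' ≺ q'` cyclically then
  `F p = F q`. -/
  eq_of_cyc : ∀ p ∈ I, ∀ q ∈ I, ∀ p' ∈ F p, ∀ q' ∈ F q,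
    cyc4 p q p' q' → F p = F q
  /-- (I3) closedness under limits of sequences from the interior of `I`. -/
  mem_of_tendsto : ∀ (pn qn : ℕ → S1) (p q : S1),
    (∀ n, pn n ∈ interior I) → (∀ n, qn n ∈ interior I) →
    p ∈ I → q ∈ I →
    Tendsto pn atTop (nhds p) → Tendsto qn atTop (nhds q) →
    (∀ n, qn n ∈ F (pn n)) → q ∈ F p


/-! Suppose no `c ∈ (a,b)` works. Call `(x,y) ⊆ [a,b]` a gap if `F x = F y` and `F x` misses
`(x,y)`. By (I1) and (I2), every `F p` with `p` inside a gap `(x,y)` lies in `(x,y)`; for the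
midpoint `m` it is then disconnected, and since it is compact its lift to `[x,y]` has a gap
`(u,v)` avoiding `m`, which is again a gap of the system, of at most half the length. Nesting
these gaps shrinks them to a point `c`, and then `F c = {c}` is connected, a contradiction. -/

open Set

theorem eq_of_pr_eq_of_abs_sub_lt_one {s t : ℝ} (h : pr s = pr t) (hst : |s - t| < 1) :
    s = t := by
  rw [abs_sub_lt_iff] at hst
  have hs : s ∈ Ico (min s t) (min s t + 1) := ⟨min_le_left s t, by grind⟩
  have ht : t ∈ Ico (min s t) (min s t + 1) := ⟨min_le_right s t, by grind⟩
  exact (AddCircle.coe_eq_coe_iff_of_mem_Ico hs ht).1 h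

theorem exists_pr_eq_mem_Ico (x : ℝ) (w : S1) : ∃ t ∈ Ico x (x + 1), pr t = w :=
  ⟨AddCircle.equivIco 1 x w, (AddCircle.equivIco 1 x w).2, AddCircle.coe_equivIco⟩

theorem continuous_pr : Continuous pr := AddCircle.continuous_mk' 1

theorem dist_pr_le (s t : ℝ) : dist (pr s) (pr t) ≤ |s - t| := by
  rw [dist_eq_norm, pr, pr, ← AddCircle.coe_sub]
  exact QuotientAddGroup.norm_mk_le_norm

theorem mem_Ioo_of_pr_mem_arcOO {x y t : ℝ} (hy : y ≤ x + 1) (ht : t ∈ Icc x y)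
    (h : pr t ∈ arcOO x y) : t ∈ Ioo x y := by
  obtain ⟨s, hs, hst⟩ := h
  rwa [← eq_of_pr_eq_of_abs_sub_lt_one hst (by rw [abs_sub_lt_iff]; grind)]

theorem IsCompact.exists_gap_of_not_ordConnected {α : Type*} [ConditionallyCompleteLinearOrder α]
    [TopologicalSpace α] [OrderTopology α] {K : Set α} (hK : IsCompact K)
    (h : ¬ K.OrdConnected) : ∃ u ∈ K, ∃ v ∈ K, u < v ∧ Disjoint (Ioo u v) K := by
  obtain ⟨u, hu, v, hv, huv⟩ : ∃ u ∈ K, ∃ v ∈ K, ¬ Icc u v ⊆ K := by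
    simpa [ordConnected_def] using h
  obtain ⟨z, ⟨huz, hzv⟩, hzK⟩ := not_subset.1 huv
  have hK₁ : IsCompact (K ∩ Iic z) := hK.inter_right isClosed_Iic
  have hK₂ : IsCompact (K ∩ Ici z) := hK.inter_right isClosed_Ici
  have hsup := hK₁.sSup_mem ⟨u, hu, huz⟩
  have hinf := hK₂.sInf_mem ⟨v, hv, hzv⟩
  have hsup_lt : sSup (K ∩ Iic z) < z := hsup.2.lt_of_ne fun h ↦ hzK (h ▸ hsup.1)
  have hlt_inf : z < sInf (K ∩ Ici z) := hinf.2.lt_of_ne' fun h ↦ hzK (h ▸ hinf.1)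
  refine ⟨_, hsup.1, _, hinf.1, hsup_lt.trans hlt_inf,
    disjoint_left.2 fun t ⟨hut, htv⟩ htK ↦ ?_⟩
  rcases le_total t z with htz | hzt
  · exact hut.not_ge (le_csSup hK₁.bddAbove ⟨htK, htz⟩)
  · exact htv.not_ge (csInf_le hK₂.bddBelow ⟨htK, hzt⟩)

theorem exists_forall_exists_mem_Ioo_of_halving {P : ℝ → ℝ → Prop} {a b : ℝ} (h₀ : P a b)
    (hlt : ∀ x y, P x y → x < y)
    (hstep : ∀ x y, P x y → ∃ x' y', x < x' ∧ y' < y ∧ y' - x' ≤ (y - x) / 2 ∧ P x' y') :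
    ∃ c, ∀ ε > 0, ∃ x y, P x y ∧ c ∈ Ioo x y ∧ y - x < ε := by
  obtain ⟨next, hnext⟩ : ∃ next : {p : ℝ × ℝ // P p.1 p.2} → {p : ℝ × ℝ // P p.1 p.2},
      ∀ p, p.1.1 < (next p).1.1 ∧ (next p).1.2 < p.1.2 ∧
        (next p).1.2 - (next p).1.1 ≤ (p.1.2 - p.1.1) / 2 := by
    choose x' y' h using fun p : {p : ℝ × ℝ // P p.1 p.2} ↦ hstep _ _ p.2
    exact ⟨fun p ↦ ⟨(x' p, y' p), (h p).2.2.2⟩, fun p ↦ ⟨(h p).1, (h p).2.1, (h p).2.2.1⟩⟩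
  set s : ℕ → {p : ℝ × ℝ // P p.1 p.2} := fun n ↦ next^[n] ⟨(a, b), h₀⟩
  have hs : ∀ n, s (n + 1) = next (s n) := fun n ↦ Function.iterate_succ_apply' _ _ _
  set A : ℕ → ℝ := fun n ↦ (s n).1.1
  set B : ℕ → ℝ := fun n ↦ (s n).1.2
  have hAB : ∀ n, A n < A (n + 1) ∧ B (n + 1) < B n ∧
      B (n + 1) - A (n + 1) ≤ (B n - A n) / 2 := fun n ↦ by
    simpa only [A, B, hs] using hnext (s n)
  have hA : StrictMono A := strictMono_nat_of_lt_succ fun n ↦ (hAB n).1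
  have hB : StrictAnti B := strictAnti_nat_of_succ_lt fun n ↦ (hAB n).2.1
  have hlen : ∀ n, B n - A n ≤ (b - a) / 2 ^ n := by
    intro n
    induction n with
    | zero => simp [A, B, s]
    | succ n ih =>
      calc B (n + 1) - A (n + 1) ≤ (B n - A n) / 2 := (hAB n).2.2
        _ ≤ (b - a) / 2 ^ (n + 1) := by rw [pow_succ, ← div_div]; gcongr
  have hc := hA.monotone.ciSup_mem_iInter_Icc_of_antitone hB.antitone
    fun n ↦ (hlt _ _ (s n).2).le
  refine ⟨⨆ n, A n, fun ε hε ↦ ?_⟩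
  obtain ⟨n, hn⟩ : ∃ n : ℕ, (b - a) / 2 ^ n < ε := by
    obtain ⟨n, hn⟩ := pow_unbounded_of_one_lt ((b - a) / ε) one_lt_two
    exact ⟨n, (div_lt_iff₀ (by positivity)).2 ((div_lt_iff₀ hε).1 hn |>.trans_eq (mul_comm _ _))⟩
  have hcn := mem_iInter.1 hc (n + 1)
  exact ⟨A n, B n, (s n).2, ⟨(hA n.lt_succ_self).trans_le hcn.1,
    hcn.2.trans_lt (hB n.lt_succ_self)⟩, (hlen n).trans_lt hn⟩

section IntrinsicCircleSystem

structure IsGap (F : S1 → Set S1) (x y : ℝ) : Prop where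
  lt : x < y
  lt_add_one : y < x + 1
  eq : F (pr x) = F (pr y)
  inter_arcOO_eq_empty : F (pr x) ∩ arcOO x y = ∅

variable {I : Set S1} {F : S1 → Set S1} {x y : ℝ}

theorem IsIntrinsicCircleSystem.subset_arcOO (hF : IsIntrinsicCircleSystem I F)
    (hI : arcCC x y ⊆ I) (hg : IsGap F x y) {p : ℝ} (hp : p ∈ Ioo x y) :
    F (pr p) ⊆ arcOO x y := by
  have mem_I : ∀ t ∈ Icc x y, pr t ∈ I := fun t ht ↦ hI (mem_image_of_mem pr ht)
  have hxI := mem_I x (left_mem_Icc.2 hg.lt.le)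
  have hyI := mem_I y (right_mem_Icc.2 hg.lt.le)
  have hpI := mem_I p (Ioo_subset_Icc_self hp)
  have hne : F (pr p) ≠ F (pr x) := fun h ↦
    (eq_empty_iff_forall_notMem.1 hg.inter_arcOO_eq_empty) (pr p)
      ⟨h ▸ hF.mem_self _ hpI, mem_image_of_mem pr hp⟩
  have hnot : ∀ w ∈ F (pr x), w ∉ F (pr p) := fun w hwx hwp ↦
    hne (hF.eq_of_inter _ hpI _ hxI ⟨w, hwp, hwx⟩)
  have hyF : pr y ∈ F (pr x) := hg.eq ▸ hF.mem_self _ hyI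
  intro w hw
  obtain ⟨t, ⟨hxt, ht1⟩, rfl⟩ := exists_pr_eq_mem_Ico x w
  rcases hxt.eq_or_lt with rfl | hxt
  · exact absurd hw (hnot _ (hF.mem_self _ hxI))
  rcases lt_trichotomy t y with hty | rfl | hyt
  · exact mem_image_of_mem pr ⟨hxt, hty⟩
  · exact absurd hw (hnot _ hyF)
  · exact absurd (hF.eq_of_cyc _ hxI _ hpI _ hyF _ hw
      ⟨x, p, y, t, rfl, rfl, rfl, rfl, hp.1, hp.2, hyt, ht1⟩).symm hne

theorem IsIntrinsicCircleSystem.exists_isGap_of_not_isConnected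
    (hF : IsIntrinsicCircleSystem I F) (hI : arcCC x y ⊆ I) (hg : IsGap F x y) {m : ℝ}
    (hm : m ∈ Ioo x y) (hconn : ¬ IsConnected (F (pr m))) :
    ∃ u v, x < u ∧ v < y ∧ m ∉ Ioo u v ∧ IsGap F u v := by
  have mem_I : ∀ t ∈ Icc x y, pr t ∈ I := fun t ht ↦ hI (mem_image_of_mem pr ht)
  have hmI := mem_I m (Ioo_subset_Icc_self hm)
  have hsub := hF.subset_arcOO hI hg hm
  set K := Icc x y ∩ pr ⁻¹' F (pr m)
  have hKIoo : K ⊆ Ioo x y := fun t ht ↦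
    mem_Ioo_of_pr_mem_arcOO hg.lt_add_one.le ht.1 (hsub ht.2)
  have hKimage : pr '' K = F (pr m) := by
    refine (image_subset_iff.2 inter_subset_right).antisymm fun w hw ↦ ?_
    obtain ⟨t, ht, rfl⟩ := hsub hw
    exact ⟨t, ⟨Ioo_subset_Icc_self ht, hw⟩, rfl⟩
  have hmK : m ∈ K := ⟨Ioo_subset_Icc_self hm, hF.mem_self _ hmI⟩
  have hKord : ¬ K.OrdConnected := fun hord ↦ hconn <| hKimage ▸
    ⟨⟨_, mem_image_of_mem pr hmK⟩,
      (isPreconnected_iff_ordConnected.2 hord).image pr continuous_pr.continuousOn⟩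
  have hKcpt : IsCompact K :=
    isCompact_Icc.inter_right ((hF.isClosed _ hmI).preimage continuous_pr)
  obtain ⟨u, hu, v, hv, huv, hdisj⟩ := hKcpt.exists_gap_of_not_ordConnected hKord
  have hFK : ∀ t ∈ K, F (pr t) = F (pr m) := fun t ht ↦
    hF.eq_of_inter _ (mem_I t ht.1) _ hmI ⟨pr t, hF.mem_self _ (mem_I t ht.1), ht.2⟩
  obtain ⟨hxu, -⟩ := hKIoo hu
  obtain ⟨-, hvy⟩ := hKIoo hv
  refine ⟨u, v, hxu, hvy, disjoint_right.1 hdisj hmK, huv, by linarith [hg.lt_add_one],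
    (hFK u hu).trans (hFK v hv).symm, eq_empty_iff_forall_notMem.2 ?_⟩
  rintro _ ⟨hw, t, ht, rfl⟩
  exact disjoint_left.1 hdisj ht ⟨⟨(hxu.trans ht.1).le, (ht.2.trans hvy).le⟩, hFK u hu ▸ hw⟩

theorem IsIntrinsicCircleSystem.exists_isConnected_or_exists_half_isGap
    (hF : IsIntrinsicCircleSystem I F) (hI : arcCC x y ⊆ I) (hg : IsGap F x y) :
    (∃ c ∈ arcOO x y, IsConnected (F c) ∧ F c ⊆ arcOO x y) ∨
      ∃ u v, x < u ∧ v < y ∧ v - u ≤ (y - x) / 2 ∧ IsGap F u v := by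
  have hm : (x + y) / 2 ∈ Ioo x y := ⟨by linarith [hg.lt], by linarith [hg.lt]⟩
  by_cases hconn : IsConnected (F (pr ((x + y) / 2)))
  · exact .inl ⟨_, mem_image_of_mem pr hm, hconn, hF.subset_arcOO hI hg hm⟩
  obtain ⟨u, v, hxu, hvy, hm_notMem, hg'⟩ := hF.exists_isGap_of_not_isConnected hI hg hm hconn
  rw [mem_Ioo, not_and_or, not_lt, not_lt] at hm_notMem
  exact .inr ⟨u, v, hxu, hvy, by rcases hm_notMem with h | h <;> linarith [hg'.lt], hg'⟩

theorem IsIntrinsicCircleSystem.eq_singleton_of_forall_isGap (hF : IsIntrinsicCircleSystem I F)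
    {c : ℝ} (h : ∀ ε > 0, ∃ x y, arcCC x y ⊆ I ∧ IsGap F x y ∧ c ∈ Ioo x y ∧ y - x < ε) :
    F (pr c) = {pr c} := by
  obtain ⟨x, y, hI, -, hc, -⟩ := h 1 one_pos
  refine subset_antisymm (fun w hw ↦ eq_of_forall_dist_le fun ε hε ↦ ?_)
    (singleton_subset_iff.2 (hF.mem_self _ (hI (mem_image_of_mem pr (Ioo_subset_Icc_self hc)))))
  obtain ⟨x, y, hI, hg, hc, hxy⟩ := h ε hε
  obtain ⟨s, hs, rfl⟩ := hF.subset_arcOO hI hg hc hw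
  calc dist (pr s) (pr c) ≤ |s - c| := dist_pr_le s c
    _ ≤ ε := by rw [abs_sub_le_iff]; constructor <;> linarith [hs.1, hs.2, hc.1, hc.2]

end IntrinsicCircleSystem

/-- **Lemma on intrinsic circle systems (Kneser-type lemma).**
If `F a = F b` and `F a` misses the open arc `(a,b)`, then some `c ∈ (a,b)` has
`F c` connected and contained in `(a,b)`. -/
theorem intrinsicCircleSystem_exists_connected
    (a b : ℝ) (hab : a < b) (hb1 : b < a + 1)
    (F : S1 → Set S1)
    (hF : IsIntrinsicCircleSystem (arcCC a b) F)
    (heq : F (pr a) = F (pr b))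
    (hdisj : F (pr a) ∩ arcOO a b = ∅) :
    ∃ c ∈ arcOO a b, IsConnected (F c) ∧ F c ⊆ arcOO a b := by
  by_contra! hcon
  have arcCC_sub {x y : ℝ} (hax : a ≤ x) (hyb : y ≤ b) : arcCC x y ⊆ arcCC a b :=
    image_mono (Icc_subset_Icc hax hyb)
  have hstep (x y : ℝ) (h : a ≤ x ∧ y ≤ b ∧ IsGap F x y) : ∃ x' y', x < x' ∧ y' < y ∧
      y' - x' ≤ (y - x) / 2 ∧ a ≤ x' ∧ y' ≤ b ∧ IsGap F x' y' := by
    obtain ⟨hax, hyb, hg⟩ := h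
    have harc : arcOO x y ⊆ arcOO a b := image_mono (Ioo_subset_Ioo hax hyb)
    obtain ⟨c, hc, hconn, hsub⟩ | ⟨u, v, hxu, hvy, hlen, hg'⟩ :=
      hF.exists_isConnected_or_exists_half_isGap (arcCC_sub hax hyb) hg
    · exact absurd (hsub.trans harc) (hcon c (harc hc) hconn)
    · exact ⟨u, v, hxu, hvy, hlen, by linarith, by linarith, hg'⟩
  obtain ⟨c, hc⟩ := exists_forall_exists_mem_Ioo_of_halving ⟨le_rfl, le_rfl, hab, hb1, heq, hdisj⟩
    (fun x y h ↦ h.2.2.lt) hstep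
  have hsingle : F (pr c) = {pr c} := hF.eq_singleton_of_forall_isGap fun ε hε ↦ by
    obtain ⟨x, y, ⟨hax, hyb, hg⟩, hcxy, hxy⟩ := hc ε hε
    exact ⟨x, y, arcCC_sub hax hyb, hg, hcxy, hxy⟩
  obtain ⟨x, y, ⟨hax, hyb, -⟩, hcxy, -⟩ := hc 1 one_pos
  have hcab : pr c ∈ arcOO a b := mem_image_of_mem pr ⟨hax.trans_lt hcxy.1, hcxy.2.trans_le hyb⟩
  exact hcon _ hcab (hsingle ▸ isConnected_singleton) (hsingle ▸ singleton_subset_iff.2 hcab)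
end
end

section
/- Let I = [a,b] or [a,b) with a ≠ b be an arc of S¹ = ℝ/ℤ, and let {f_{p,q}}_{(p,q)∈I²_*} be an intrinsic conic system on I such that f_{a,a} = f_{a,b} and F_{a,b} ∩ (a,b) = ∅. Then there exists c ∈ (a,b) such that f_{a,c} = f_{c,c} and the support F_{c,c} is contained in [a,b); furthermore a is isolated in F_{a,c} and F_{a,c} has exactly two connected components. -/
open Filter Topology

noncomputable section

/-- `p ⪯ q ⪯ p' ⪯ q' ≺ p'' ≺ q'' (≺ p)` cyclically, via representatives
`p̃ ≤ q̃ ≤ p̃' ≤ q̃' < p̃'' < q̃'' < p̃ + 1`. -/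
def chain6 (p q p' q' p'' q'' : S1) : Prop :=
  ∃ a b c d e g : ℝ, pr a = p ∧ pr b = q ∧ pr c = p' ∧ pr d = q' ∧
    pr e = p'' ∧ pr g = q'' ∧
    a ≤ b ∧ b ≤ c ∧ c ≤ d ∧ d < e ∧ e < g ∧ g < a + 1

/-- The reverse cyclic order `p ⪰ q ⪰ p' ⪰ q' ≻ p'' ≻ q'' (≻ p)`, via
representatives `p̃ ≥ q̃ ≥ p̃' ≥ q̃' > p̃'' > q̃'' > p̃ - 1`. -/
def chain6rev (p q p' q' p'' q'' : S1) : Prop :=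
  ∃ a b c d e g : ℝ, pr a = p ∧ pr b = q ∧ pr c = p' ∧ pr d = q' ∧
    pr e = p'' ∧ pr g = q'' ∧
    b ≤ a ∧ c ≤ b ∧ d ≤ c ∧ e < d ∧ g < e ∧ a - 1 < g

/-- The index set `I²_* = (Ī × Ī) \ {(p,p) : p ∈ Ī \ I}` of an intrinsic conic
system on `I`. -/
def ConicDom (I : Set S1) : Set (S1 × S1) :=
  {pq | pq.1 ∈ closure I ∧ pq.2 ∈ closure I ∧ (pq.1 = pq.2 → pq.1 ∈ I)}

/-- The support `F_{p,q} = {r : f_{p,q}(r) > 0}`. -/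
def suppF (f : S1 → S1 → S1 → ℕ∞) (p q : S1) : Set S1 := {r | f p q r ≠ 0}

/-- An intrinsic conic system on `I`: a family of functions
`f p q : S¹ → {0,2,4,…} ∪ {∞}`, indexed by `(p,q) ∈ I²_*`, satisfying axioms
(A1)–(A8). -/
structure IsIntrinsicConicSystem (I : Set S1) (f : S1 → S1 → S1 → ℕ∞) : Prop where
  /-- The values of the family are even numbers or `∞`. -/
  even_values : ∀ p q r : S1, (p, q) ∈ ConicDom I →
    f p q r = ⊤ ∨ ∃ k : ℕ, f p q r = ((2 * k : ℕ) : ℕ∞)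
  /-- (A1) the supports are closed. -/
  supp_closed : ∀ p q : S1, (p, q) ∈ ConicDom I → IsClosed (suppF f p q)
  /-- (A1) `p, q ∈ F_{p,q}`. -/
  self_mem : ∀ p q : S1, (p, q) ∈ ConicDom I → f p q p ≠ 0 ∧ f p q q ≠ 0
  /-- (A2) symmetry. -/
  symm : ∀ p q : S1, (p, q) ∈ ConicDom I → f p q = f q p
  /-- (A3) if `F_{p,q}` and `F_{p,r}` share a point `s ≠ p`, then
  `f_{p,q} = f_{p,r}`. -/
  eq_of_common : ∀ p q r s : S1, (p, q) ∈ ConicDom I → (p, r) ∈ ConicDom I →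
    s ≠ p → f p q s ≠ 0 → f p r s ≠ 0 → f p q = f p r
  /-- (A4) interlacing in the (possibly reversed) cyclic order forces
  equality. -/
  eq_of_chain : ∀ p q p' q' p'' q'' : S1,
    (p, p') ∈ ConicDom I → (q, q') ∈ ConicDom I →
    f p p' p'' ≠ 0 → f q q' q'' ≠ 0 →
    (chain6 p q p' q' p'' q'' ∨ chain6rev p q p' q' p'' q'') →
    (p = p' → 4 ≤ f p p' p) → (q = q' → 4 ≤ f q q' q) →
    f p p' = f q q'
  /-- (A5) if `f_{p,q}(r) ≥ 4` and `r ∈ I` then `f_{r,r} = f_{p,q}`. -/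
  eq_diag : ∀ p q r : S1, (p, q) ∈ ConicDom I → 4 ≤ f p q r → r ∈ I →
    f r r = f p q
  /-- (A6) lower semicontinuity of multiplicities under limits, with strict
  increase for pairs of distinct points. -/
  limit_mult : ∀ (pn qn rn₁ rn₂ : ℕ → S1) (p q r : S1) (k₁ k₂ : ℕ),
    (∀ n, (pn n, qn n) ∈ ConicDom I) → (p, q) ∈ ConicDom I →
    Tendsto pn atTop (nhds p) → Tendsto qn atTop (nhds q) →
    (∀ n, rn₁ n ∈ closure I ∧ rn₁ n ∈ suppF f (pn n) (qn n)) →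
    (∀ n, rn₂ n ∈ closure I ∧ rn₂ n ∈ suppF f (pn n) (qn n)) →
    r ∈ closure I →
    Tendsto rn₁ atTop (nhds r) → Tendsto rn₂ atTop (nhds r) →
    (∀ n, (k₁ : ℕ∞) ≤ f (pn n) (qn n) (rn₁ n)) →
    (∀ n, (k₂ : ℕ∞) ≤ f (pn n) (qn n) (rn₂ n)) →
    ((max k₁ k₂ : ℕ) : ℕ∞) ≤ f p q r ∧
      ((∀ n, rn₁ n ≠ rn₂ n) → ((max k₁ k₂ : ℕ) : ℕ∞) < f p q r)
  /-- (A7) the total multiplicity of `f_{p,q}` is at least six. -/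
  total_six : ∀ p q : S1, (p, q) ∈ ConicDom I →
    ∃ s : Finset S1, 6 ≤ ∑ r ∈ s, f p q r
  /-- (A8) if `f_{p,q}(p) = 2` then `p` is isolated in `F_{p,q}`. -/
  isolated_of_two : ∀ p q : S1, (p, q) ∈ ConicDom I → f p q p = 2 →
    IsolatedIn p (suppF f p q)

/-! ### Auxiliary machinery for the proof -/

namespace ConicAux

instance : Fact ((0:ℝ) < 1) := ⟨one_pos⟩

lemma pr_continuous : Continuous pr := continuous_quotient_mk'

lemma pr_inj {p x y : ℝ} (hx : x ∈ Set.Ico p (p+1)) (hy : y ∈ Set.Ico p (p+1)) :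
    pr x = pr y ↔ x = y := AddCircle.coe_eq_coe_iff_of_mem_Ico hx hy

lemma pr_rep (a : ℝ) (z : S1) : ∃ x : ℝ, x ∈ Set.Ico a (a+1) ∧ pr x = z := by
  refine ⟨(AddCircle.equivIco 1 a) z, ((AddCircle.equivIco 1 a) z).2, ?_⟩
  exact (AddCircle.equivIco 1 a).symm_apply_apply z

lemma pr_sub_one (x : ℝ) : pr (x - 1) = pr x := by
  have := AddCircle.coe_add_period 1 (x - 1)
  simpa [pr, sub_add_cancel] using this

lemma pr_ne {p x y : ℝ} (hx : x ∈ Set.Ico p (p+1)) (hy : y ∈ Set.Ico p (p+1))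
    (hne : x ≠ y) : pr x ≠ pr y := fun h => hne ((pr_inj hx hy).mp h)

/-- Bundle of all standing hypotheses. -/
structure Hyp where
  a : ℝ
  b : ℝ
  hab : a < b
  hb1 : b < a + 1
  I : Set S1
  hI : I = arcCC a b ∨ I = arcCO a b
  f : S1 → S1 → S1 → ℕ∞
  hf : IsIntrinsicConicSystem I f
  heq : f (pr a) (pr a) = f (pr a) (pr b)
  hdisj : suppF f (pr a) (pr b) ∩ arcOO a b = ∅

namespace Hyp

variable (H : Hyp)

lemma a_lt_a1 : H.a < H.a + 1 := by linarith [H.hab, H.hb1]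

lemma mem_window_a : H.a ∈ Set.Ico H.a (H.a + 1) := ⟨le_rfl, H.a_lt_a1⟩

lemma mem_window_b : H.b ∈ Set.Ico H.a (H.a + 1) := ⟨H.hab.le, H.hb1⟩

lemma mem_window {x : ℝ} (h1 : H.a ≤ x) (h2 : x < H.b) : x ∈ Set.Ico H.a (H.a + 1) :=
  ⟨h1, h2.trans H.hb1⟩

lemma pr_a_ne_b : pr H.a ≠ pr H.b := pr_ne H.mem_window_a H.mem_window_b H.hab.ne

lemma pr_a_ne {x : ℝ} (h1 : H.a < x) (h2 : x < H.b) : pr H.a ≠ pr x :=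
  pr_ne H.mem_window_a (H.mem_window h1.le h2) h1.ne

lemma memI_Ico {x : ℝ} (h : x ∈ Set.Ico H.a H.b) : pr x ∈ H.I := by
  rcases H.hI with hI | hI <;> rw [hI]
  · exact ⟨x, ⟨h.1, h.2.le⟩, rfl⟩
  · exact ⟨x, h, rfl⟩

lemma memI_a : pr H.a ∈ H.I := H.memI_Ico ⟨le_rfl, H.hab⟩

lemma mem_closureI {x : ℝ} (h : x ∈ Set.Icc H.a H.b) : pr x ∈ closure H.I := by
  rcases lt_or_eq_of_le h.2 with hxb | hxb
  · exact subset_closure (H.memI_Ico ⟨h.1, hxb⟩)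
  · subst hxb
    rcases H.hI with hI | hI <;> rw [hI]
    · exact subset_closure ⟨H.b, ⟨H.hab.le, le_rfl⟩, rfl⟩
    · have h1 := image_closure_subset_closure_image (s := Set.Ico H.a H.b) pr_continuous
      rw [closure_Ico H.hab.ne] at h1
      exact h1 ⟨H.b, ⟨H.hab.le, le_rfl⟩, rfl⟩

lemma dom_ax {x : ℝ} (h : x ∈ Set.Icc H.a H.b) : (pr H.a, pr x) ∈ ConicDom H.I :=
  ⟨H.mem_closureI ⟨le_rfl, H.hab.le⟩, H.mem_closureI h, fun _ => H.memI_a⟩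

lemma dom_aa : (pr H.a, pr H.a) ∈ ConicDom H.I := H.dom_ax ⟨le_rfl, H.hab.le⟩

lemma dom_ab : (pr H.a, pr H.b) ∈ ConicDom H.I := H.dom_ax ⟨H.hab.le, le_rfl⟩

lemma dom_diag {x : ℝ} (h : x ∈ Set.Ico H.a H.b) : (pr x, pr x) ∈ ConicDom H.I :=
  ⟨H.mem_closureI ⟨h.1, h.2.le⟩, H.mem_closureI ⟨h.1, h.2.le⟩, fun _ => H.memI_Ico h⟩

/-! ### Arithmetic on values -/

lemma two_le {p q r : S1} (hdom : (p, q) ∈ ConicDom H.I) (h : H.f p q r ≠ 0) :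
    2 ≤ H.f p q r := by
  rcases H.hf.even_values p q r hdom with h1 | ⟨k, hk⟩
  · simp [h1]
  · rw [hk] at h ⊢
    have : k ≠ 0 := by rintro rfl; simp at h
    exact_mod_cast (by omega : 2 ≤ 2*k)

lemma four_le {p q r : S1} (hdom : (p, q) ∈ ConicDom H.I) (h : 2 < H.f p q r) :
    4 ≤ H.f p q r := by
  rcases H.hf.even_values p q r hdom with h1 | ⟨k, hk⟩
  · simp [h1]
  · rw [hk] at h ⊢
    have : (2:ℕ) < 2*k := by exact_mod_cast h
    exact_mod_cast (by omega : 4 ≤ 2*k)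

lemma eq_two {p q r : S1} (hdom : (p, q) ∈ ConicDom H.I) (h0 : H.f p q r ≠ 0)
    (h4 : ¬ 4 ≤ H.f p q r) : H.f p q r = 2 := by
  rcases H.hf.even_values p q r hdom with h1 | ⟨k, hk⟩
  · exact absurd (h1 ▸ le_top) h4
  · rw [hk] at h0 h4 ⊢
    have hk0 : k ≠ 0 := by rintro rfl; simp at h0
    have : ¬ (4:ℕ) ≤ 2*k := fun hc => h4 (by exact_mod_cast hc)
    have : k = 1 := by omega
    subst this; rfl

end Hyp

end ConicAux
namespace ConicAux
namespace Hyp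

variable (H : Hyp)

lemma tendsto_seq : Tendsto (fun n : ℕ => H.a + (H.b - H.a)/(n+2)) atTop (nhds H.a) := by
  have h1 : Tendsto (fun n : ℕ => ((n:ℝ)+2)) atTop atTop :=
    tendsto_atTop_add_const_right _ _ tendsto_natCast_atTop_atTop
  have h2 : Tendsto (fun n : ℕ => (H.b - H.a)/((n:ℝ)+2)) atTop (nhds 0) :=
    Tendsto.div_atTop tendsto_const_nhds h1
  simpa using tendsto_const_nhds.add h2

lemma seq_gt (n : ℕ) : H.a < H.a + (H.b - H.a)/(n+2) := by
  have h0 : (0:ℝ) ≤ (n:ℝ) := Nat.cast_nonneg n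
  have : (0:ℝ) < (H.b - H.a)/(n+2) := by
    apply div_pos (by linarith [H.hab]) (by linarith)
  linarith

lemma seq_lt (n : ℕ) : H.a + (H.b - H.a)/(n+2) < H.b := by
  have h0 : (0:ℝ) ≤ (n:ℝ) := Nat.cast_nonneg n
  have hba : (0:ℝ) < H.b - H.a := by linarith [H.hab]
  have : (H.b - H.a)/(n+2) < H.b - H.a := div_lt_self hba (by linarith)
  linarith

lemma faaa_ge4 : 4 ≤ H.f (pr H.a) (pr H.a) (pr H.a) := by
  set t : ℕ → ℝ := fun n => H.a + (H.b - H.a)/(n+2) with ht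
  have hta : ∀ n, H.a < t n := H.seq_gt
  have htb : ∀ n, t n < H.b := H.seq_lt
  have hptend : Tendsto (fun n => pr (t n)) atTop (nhds (pr H.a)) :=
    (pr_continuous.tendsto H.a).comp H.tendsto_seq
  have hdomn : ∀ n, (pr H.a, pr (t n)) ∈ ConicDom H.I :=
    fun n => H.dom_ax ⟨(hta n).le, (htb n).le⟩
  have key := H.hf.limit_mult (fun _ => pr H.a) (fun n => pr (t n)) (fun _ => pr H.a)
      (fun n => pr (t n)) (pr H.a) (pr H.a) (pr H.a) 2 2 hdomn H.dom_aa
      tendsto_const_nhds hptend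
      (fun n => ⟨H.mem_closureI ⟨le_rfl, H.hab.le⟩, (H.hf.self_mem _ _ (hdomn n)).1⟩)
      (fun n => ⟨H.mem_closureI ⟨(hta n).le, (htb n).le⟩, (H.hf.self_mem _ _ (hdomn n)).2⟩)
      (H.mem_closureI ⟨le_rfl, H.hab.le⟩) tendsto_const_nhds hptend
      (fun n => by simpa using H.two_le (hdomn n) (H.hf.self_mem _ _ (hdomn n)).1)
      (fun n => by simpa using H.two_le (hdomn n) (H.hf.self_mem _ _ (hdomn n)).2)
  have hlt := key.2 (fun n => (H.pr_a_ne (hta n) (htb n)))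
  refine H.four_le H.dom_aa ?_
  calc (2:ℕ∞) = ((max 2 2 : ℕ) : ℕ∞) := by norm_num
  _ < _ := hlt

lemma supp_ab_zero {t : ℝ} (h1 : H.a < t) (h2 : t < H.b) :
    H.f (pr H.a) (pr H.b) (pr t) = 0 := by
  by_contra h
  have : pr t ∈ suppF H.f (pr H.a) (pr H.b) ∩ arcOO H.a H.b := ⟨h, ⟨t, ⟨h1, h2⟩, rfl⟩⟩
  rw [H.hdisj] at this
  exact this

lemma faa_ne_fat {t : ℝ} (h1 : H.a < t) (h2 : t < H.b)
    (h : H.f (pr H.a) (pr H.a) = H.f (pr H.a) (pr t)) : False := by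
  have h3 : H.f (pr H.a) (pr t) (pr t) ≠ 0 :=
    (H.hf.self_mem _ _ (H.dom_ax ⟨h1.le, h2.le⟩)).2
  rw [← h, H.heq] at h3
  exact h3 (H.supp_ab_zero h1 h2)

lemma b_not_supp {t : ℝ} (h1 : H.a < t) (h2 : t < H.b) :
    H.f (pr H.a) (pr t) (pr H.b) = 0 := by
  by_contra h
  have heqq := H.hf.eq_of_common (pr H.a) (pr t) (pr H.b) (pr H.b)
    (H.dom_ax ⟨h1.le, h2.le⟩) H.dom_ab H.pr_a_ne_b.symm h
    (H.hf.self_mem _ _ H.dom_ab).2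
  have h3 : H.f (pr H.a) (pr t) (pr t) ≠ 0 :=
    (H.hf.self_mem _ _ (H.dom_ax ⟨h1.le, h2.le⟩)).2
  rw [heqq] at h3
  exact h3 (H.supp_ab_zero h1 h2)

lemma beyond_zero {t x : ℝ} (h1 : H.a < t) (h2 : t < H.b) (h3 : H.b < x)
    (h4 : x < H.a + 1) : H.f (pr H.a) (pr t) (pr x) = 0 := by
  by_contra h
  have hfb : H.f (pr H.a) (pr H.a) (pr H.b) ≠ 0 := by
    rw [H.heq]; exact (H.hf.self_mem _ _ H.dom_ab).2
  have hchain : chain6 (pr H.a) (pr H.a) (pr H.a) (pr t) (pr H.b) (pr x) :=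
    ⟨H.a, H.a, H.a, t, H.b, x, rfl, rfl, rfl, rfl, rfl, rfl,
      le_rfl, le_rfl, h1.le, h2, h3, h4⟩
  have := H.hf.eq_of_chain (pr H.a) (pr H.a) (pr H.a) (pr t) (pr H.b) (pr x)
    H.dom_aa (H.dom_ax ⟨h1.le, h2.le⟩) hfb h (Or.inl hchain)
    (fun _ => H.faaa_ge4) (fun hc => absurd hc (H.pr_a_ne h1 h2))
  exact H.faa_ne_fat h1 h2 this

lemma supp_rep {t : ℝ} (h1 : H.a < t) (h2 : t < H.b) {r : S1}
    (hr : H.f (pr H.a) (pr t) r ≠ 0) :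
    r = pr H.a ∨ ∃ x, H.a < x ∧ x < H.b ∧ pr x = r := by
  obtain ⟨x, hx, rfl⟩ := pr_rep H.a r
  rcases eq_or_lt_of_le hx.1 with rfl | hax
  · exact Or.inl rfl
  · rcases lt_trichotomy x H.b with hxb | rfl | hbx
    · exact Or.inr ⟨x, hax, hxb, rfl⟩
    · exact (hr (H.b_not_supp h1 h2)).elim
    · exact (hr (H.beyond_zero h1 h2 hbx hx.2)).elim

lemma fata_two {t : ℝ} (h1 : H.a < t) (h2 : t < H.b) :
    H.f (pr H.a) (pr t) (pr H.a) = 2 := by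
  have hdom := H.dom_ax (⟨h1.le, h2.le⟩ : t ∈ Set.Icc H.a H.b)
  refine H.eq_two hdom (H.hf.self_mem _ _ hdom).1 ?_
  intro h4
  exact H.faa_ne_fat h1 h2 (H.hf.eq_diag (pr H.a) (pr t) (pr H.a) hdom h4 H.memI_a)

lemma isolated_a {t : ℝ} (h1 : H.a < t) (h2 : t < H.b) :
    IsolatedIn (pr H.a) (suppF H.f (pr H.a) (pr t)) :=
  H.hf.isolated_of_two _ _ (H.dom_ax ⟨h1.le, h2.le⟩) (H.fata_two h1 h2)

lemma class_eq {t s : ℝ} (h1 : H.a < t) (h2 : t < H.b) (h3 : H.a < s) (h4 : s < H.b)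
    (h : H.f (pr H.a) (pr t) (pr s) ≠ 0) :
    H.f (pr H.a) (pr t) = H.f (pr H.a) (pr s) :=
  H.hf.eq_of_common (pr H.a) (pr t) (pr s) (pr s) (H.dom_ax ⟨h1.le, h2.le⟩)
    (H.dom_ax ⟨h3.le, h4.le⟩) (H.pr_a_ne h3 h4).symm h
    (H.hf.self_mem _ _ (H.dom_ax ⟨h3.le, h4.le⟩)).2

end Hyp

/-- The class of `t`: the part of the support of `f_{a,t}` lying in `(a,b)`,
viewed in the real line. -/
def Kr (H : Hyp) (t : ℝ) : Set ℝ :=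
  {x | H.a < x ∧ x < H.b ∧ H.f (pr H.a) (pr t) (pr x) ≠ 0}

namespace Hyp

variable (H : Hyp)

lemma Kr_self {t : ℝ} (h1 : H.a < t) (h2 : t < H.b) : t ∈ Kr H t :=
  ⟨h1, h2, (H.hf.self_mem _ _ (H.dom_ax ⟨h1.le, h2.le⟩)).2⟩

lemma Kr_sub (t : ℝ) : Kr H t ⊆ Set.Ioo H.a H.b := fun _ hx => ⟨hx.1, hx.2.1⟩

lemma Kr_congr {t s : ℝ} (h : H.f (pr H.a) (pr t) = H.f (pr H.a) (pr s)) :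
    Kr H t = Kr H s := by
  unfold Kr
  rw [h]

lemma f_eq_of_mem {t s : ℝ} (h1 : H.a < t) (h2 : t < H.b) (hs : s ∈ Kr H t) :
    H.f (pr H.a) (pr t) = H.f (pr H.a) (pr s) :=
  H.class_eq h1 h2 hs.1 hs.2.1 hs.2.2

lemma Kr_eq_of_mem {t s : ℝ} (h1 : H.a < t) (h2 : t < H.b) (hs : s ∈ Kr H t) :
    Kr H s = Kr H t :=
  (H.Kr_congr (H.f_eq_of_mem h1 h2 hs)).symm

end Hyp
end ConicAux
namespace ConicAux

/-- A set has a gap: two points with a missing point in between. -/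
def HasGap (K : Set ℝ) : Prop :=
  ∃ u v w, u ∈ K ∧ v ∈ K ∧ u < w ∧ w < v ∧ w ∉ K

lemma ordConnected_of_not_gap {K : Set ℝ} (h : ¬ HasGap K) : K.OrdConnected := by
  constructor
  intro u hu v hv w hw
  by_contra hwK
  refine h ⟨u, v, w, hu, hv, ?_, ?_, hwK⟩
  · rcases eq_or_lt_of_le hw.1 with he | hl
    · exact absurd (by rw [← he]; exact hu) hwK
    · exact hl
  · rcases eq_or_lt_of_le hw.2 with he | hl
    · exact absurd (by rw [he]; exact hv) hwK
    · exact hl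

namespace Hyp

variable (H : Hyp)

lemma Kr_compact {t : ℝ} (h1 : H.a < t) (h2 : t < H.b) : IsCompact (Kr H t) := by
  obtain ⟨U, hUo, haU, hUF⟩ := H.isolated_a h1 h2
  have hclosed : IsClosed (suppF H.f (pr H.a) (pr t)) :=
    H.hf.supp_closed _ _ (H.dom_ax ⟨h1.le, h2.le⟩)
  obtain ⟨ε, hε, hball⟩ := Metric.isOpen_iff.mp (hUo.preimage pr_continuous) H.a haU
  have hbV : H.b ∈ pr ⁻¹' (suppF H.f (pr H.a) (pr t))ᶜ :=
    fun hb => hb (H.b_not_supp h1 h2)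
  obtain ⟨δ, hδ, hballb⟩ := Metric.isOpen_iff.mp
    ((hclosed.isOpen_compl).preimage pr_continuous) H.b hbV
  have hsub1 : ∀ x ∈ Kr H t, H.a + ε ≤ x := by
    intro x hx
    by_contra hlt
    push_neg at hlt
    have hxball : x ∈ Metric.ball H.a ε := by
      rw [Real.ball_eq_Ioo]; exact ⟨by linarith [hx.1], hlt⟩
    have : pr x ∈ U ∩ suppF H.f (pr H.a) (pr t) := ⟨hball hxball, hx.2.2⟩
    rw [hUF] at this
    have hxa : x = H.a := (pr_inj (H.mem_window hx.1.le hx.2.1) H.mem_window_a).mp this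
    linarith [hx.1]
  have hsub2 : ∀ x ∈ Kr H t, x ≤ H.b - δ := by
    intro x hx
    by_contra hlt
    push_neg at hlt
    have hxball : x ∈ Metric.ball H.b δ := by
      rw [Real.ball_eq_Ioo]; exact ⟨by linarith, by linarith [hx.2.1]⟩
    exact (hballb hxball) hx.2.2
  have hKr : Kr H t = Set.Icc (H.a + ε) (H.b - δ) ∩ pr ⁻¹' (suppF H.f (pr H.a) (pr t)) := by
    ext x
    constructor
    · intro hx; exact ⟨⟨hsub1 x hx, hsub2 x hx⟩, hx.2.2⟩
    · rintro ⟨⟨hx1, hx2⟩, hx3⟩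
      exact ⟨by linarith, by linarith, hx3⟩
  rw [hKr]
  exact isCompact_Icc.inter_right (hclosed.preimage pr_continuous)

lemma nesting {t w u v : ℝ} (ht1 : H.a < t) (ht2 : t < H.b) (hw1 : H.a < w)
    (hw2 : w < H.b) (hne : Kr H w ≠ Kr H t) (hu : u ∈ Kr H t) (hv : v ∈ Kr H t)
    (huw : u < w) (hwv : w < v) : Kr H w ⊆ Set.Ioo u v := by
  intro x hx
  by_contra hxuv
  rcases le_or_gt x u with hxu | hxu
  · rcases eq_or_lt_of_le hxu with heqxu | hxu'
    · have hxt : x ∈ Kr H t := by rw [heqxu]; exact hu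
      exact hne ((H.Kr_eq_of_mem hw1 hw2 hx).symm.trans (H.Kr_eq_of_mem ht1 ht2 hxt))
    · have hfv : H.f (pr H.a) (pr v) (pr u) ≠ 0 := by
        rw [← H.f_eq_of_mem ht1 ht2 hv]; exact hu.2.2
      have hchain : chain6rev (pr H.a) (pr H.a) (pr v) (pr w) (pr u) (pr x) :=
        ⟨H.a, H.a, v - 1, w - 1, u - 1, x - 1, rfl, rfl, pr_sub_one v, pr_sub_one w,
          pr_sub_one u, pr_sub_one x, le_rfl, by linarith [hv.2.1, H.hb1], by linarith,
          by linarith, by linarith, by linarith [hx.1]⟩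
      have hfe := H.hf.eq_of_chain (pr H.a) (pr H.a) (pr v) (pr w) (pr u) (pr x)
        (H.dom_ax ⟨hv.1.le, hv.2.1.le⟩) (H.dom_ax ⟨hw1.le, hw2.le⟩) hfv hx.2.2
        (Or.inr hchain) (fun hc => absurd hc (H.pr_a_ne hv.1 hv.2.1))
        (fun hc => absurd hc (H.pr_a_ne hw1 hw2))
      exact hne ((H.Kr_congr hfe).symm.trans (H.Kr_eq_of_mem ht1 ht2 hv))
  · rcases le_or_gt v x with hvx | hvx
    · rcases eq_or_lt_of_le hvx with heqvx | hvx'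
      · have hxt : x ∈ Kr H t := by rw [← heqvx]; exact hv
        exact hne ((H.Kr_eq_of_mem hw1 hw2 hx).symm.trans (H.Kr_eq_of_mem ht1 ht2 hxt))
      · have hfu : H.f (pr H.a) (pr u) (pr v) ≠ 0 := by
          rw [← H.f_eq_of_mem ht1 ht2 hu]; exact hv.2.2
        have hchain : chain6 (pr H.a) (pr H.a) (pr u) (pr w) (pr v) (pr x) :=
          ⟨H.a, H.a, u, w, v, x, rfl, rfl, rfl, rfl, rfl, rfl, le_rfl, hu.1.le,
            huw.le, hwv, hvx', by linarith [hx.2.1, H.hb1]⟩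
        have hfe := H.hf.eq_of_chain (pr H.a) (pr H.a) (pr u) (pr w) (pr v) (pr x)
          (H.dom_ax ⟨hu.1.le, hu.2.1.le⟩) (H.dom_ax ⟨hw1.le, hw2.le⟩) hfu hx.2.2
          (Or.inl hchain) (fun hc => absurd hc (H.pr_a_ne hu.1 hu.2.1))
          (fun hc => absurd hc (H.pr_a_ne hw1 hw2))
        exact hne ((H.Kr_congr hfe).symm.trans (H.Kr_eq_of_mem ht1 ht2 hu))
    · exact hxuv ⟨hxu, hvx⟩

lemma class_subset_gap {t u v : ℝ} (ht1 : H.a < t) (ht2 : t < H.b)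
    (hu : u ∈ Kr H t) (hv : v ∈ Kr H t) (hgap : Set.Ioo u v ∩ Kr H t = ∅)
    {w : ℝ} (hw : w ∈ Set.Ioo u v) : Kr H w ⊆ Set.Ioo u v := by
  have hw1 : H.a < w := lt_trans hu.1 hw.1
  have hw2 : w < H.b := lt_trans hw.2 hv.2.1
  have hne : Kr H w ≠ Kr H t := by
    intro hKr
    have hmem : w ∈ Set.Ioo u v ∩ Kr H t := ⟨hw, hKr ▸ H.Kr_self hw1 hw2⟩
    rw [hgap] at hmem
    exact hmem
  exact H.nesting ht1 ht2 hw1 hw2 hne hu hv hw.1 hw.2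

lemma gap_refine {t : ℝ} (ht1 : H.a < t) (ht2 : t < H.b) (hg : HasGap (Kr H t)) :
    ∃ u v, u ∈ Kr H t ∧ v ∈ Kr H t ∧ u < v ∧ Set.Ioo u v ∩ Kr H t = ∅ := by
  obtain ⟨u, v, w, hu, hv, huw, hwv, hwK⟩ := hg
  have hcomp := H.Kr_compact ht1 ht2
  have hAne : (Kr H t ∩ Set.Icc u w).Nonempty := ⟨u, hu, le_rfl, huw.le⟩
  have hAcomp : IsCompact (Kr H t ∩ Set.Icc u w) := hcomp.inter_right isClosed_Icc
  have hu₀A : sSup (Kr H t ∩ Set.Icc u w) ∈ Kr H t ∩ Set.Icc u w := hAcomp.sSup_mem hAne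
  set u₀ := sSup (Kr H t ∩ Set.Icc u w) with hu₀
  have hBne : (Kr H t ∩ Set.Icc w v).Nonempty := ⟨v, hv, hwv.le, le_rfl⟩
  have hBcomp : IsCompact (Kr H t ∩ Set.Icc w v) := hcomp.inter_right isClosed_Icc
  have hv₀B : sInf (Kr H t ∩ Set.Icc w v) ∈ Kr H t ∩ Set.Icc w v := hBcomp.sInf_mem hBne
  set v₀ := sInf (Kr H t ∩ Set.Icc w v) with hv₀
  have hu₀w : u₀ < w := lt_of_le_of_ne hu₀A.2.2 (fun he => hwK (he ▸ hu₀A.1))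
  have hwv₀ : w < v₀ := lt_of_le_of_ne hv₀B.2.1 (fun he => hwK (he.symm ▸ hv₀B.1))
  refine ⟨u₀, v₀, hu₀A.1, hv₀B.1, hu₀w.trans hwv₀, ?_⟩
  rw [Set.eq_empty_iff_forall_notMem]
  rintro x ⟨hx1, hx2⟩
  rcases le_or_gt x w with hxw | hxw
  · have hxA : x ∈ Kr H t ∩ Set.Icc u w := ⟨hx2, le_trans hu₀A.2.1 hx1.1.le, hxw⟩
    have : x ≤ u₀ := le_csSup hAcomp.bddAbove hxA
    linarith [hx1.1]
  · have hxB : x ∈ Kr H t ∩ Set.Icc w v := ⟨hx2, hxw.le, le_trans hx1.2.le hv₀B.2.2⟩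
    have : v₀ ≤ x := csInf_le hBcomp.bddBelow hxB
    linarith [hx1.2]

end Hyp
end ConicAux
namespace ConicAux
namespace Hyp

variable (H : Hyp)

lemma exists_ordConnected : ∃ c, H.a < c ∧ c < H.b ∧ (Kr H c).OrdConnected := by
  by_contra hcon
  push_neg at hcon
  have gap : ∀ t, H.a < t → t < H.b →
      ∃ u v, u ∈ Kr H t ∧ v ∈ Kr H t ∧ u < v ∧ Set.Ioo u v ∩ Kr H t = ∅ := by
    intro t h1 h2
    refine H.gap_refine h1 h2 ?_
    by_contra hng
    exact hcon t h1 h2 (ordConnected_of_not_gap hng)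
  set S : Set (Set ℝ) := {G | ∃ t u v, H.a < t ∧ t < H.b ∧ u ∈ Kr H t ∧ v ∈ Kr H t ∧
    u < v ∧ Set.Ioo u v ∩ Kr H t = ∅ ∧ G = Set.Ioo u v} with hS
  have hG_sub : ∀ G ∈ S, G ⊆ Set.Ioo H.a H.b := by
    rintro G ⟨t, u, v, ht1, ht2, hu, hv, huv, hgap, rfl⟩ x hx
    exact ⟨lt_trans hu.1 hx.1, lt_trans hx.2 hv.2.1⟩
  have hclass_sub : ∀ G ∈ S, ∀ w ∈ G, Kr H w ⊆ G := by
    rintro G ⟨t, u, v, ht1, ht2, hu, hv, huv, hgap, rfl⟩ w hw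
    exact H.class_subset_gap ht1 ht2 hu hv hgap hw
  have hgapS : ∀ w, H.a < w → w < H.b →
      ∃ u v, u ∈ Kr H w ∧ v ∈ Kr H w ∧ u < v ∧ Set.Ioo u v ∩ Kr H w = ∅ ∧
        Set.Ioo u v ∈ S := by
    intro w h1 h2
    obtain ⟨u, v, hu, hv, huv, hgap⟩ := gap w h1 h2
    exact ⟨u, v, hu, hv, huv, hgap, ⟨w, u, v, h1, h2, hu, hv, huv, hgap, rfl⟩⟩
  have hSne : S.Nonempty := by
    obtain ⟨u, v, _, _, _, _, hG⟩ :=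
      hgapS ((H.a + H.b)/2) (by linarith [H.hab]) (by linarith [H.hab])
    exact ⟨_, hG⟩
  have hchains : ∀ c ⊆ S, IsChain (· ⊆ ·) c → ∃ lb ∈ S, ∀ s ∈ c, lb ⊆ s := by
    intro c hcS hchain
    by_cases hcne : c.Nonempty
    swap
    · obtain ⟨G₀, hG₀⟩ := hSne
      exact ⟨G₀, hG₀, fun s hs => absurd ⟨s, hs⟩ hcne⟩
    by_cases hleast : ∃ G₀ ∈ c, ∀ G ∈ c, G₀ ⊆ G
    · obtain ⟨G₀, hG₀c, hG₀⟩ := hleast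
      exact ⟨G₀, hcS hG₀c, hG₀⟩
    push_neg at hleast
    have hdata : ∀ G ∈ c, ∃ t u v, H.a < t ∧ t < H.b ∧ u ∈ Kr H t ∧ v ∈ Kr H t ∧
        u < v ∧ Set.Ioo u v ∩ Kr H t = ∅ ∧ G = Set.Ioo u v := fun G hG => hcS hG
    have hIoo : ∀ G ∈ c, G = Set.Ioo (sInf G) (sSup G) ∧ sInf G < sSup G ∧
        H.a < sInf G ∧ sSup G < H.b := by
      intro G hG
      obtain ⟨t, u, v, ht1, ht2, hu, hv, huv, hgap, rfl⟩ := hdata G hG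
      rw [csInf_Ioo huv, csSup_Ioo huv]
      exact ⟨rfl, huv, hu.1, hv.2.1⟩
    have hne1 : (sInf '' c).Nonempty := hcne.image _
    have hne2 : (sSup '' c).Nonempty := hcne.image _
    have hbdd1 : BddAbove (sInf '' c) := by
      refine ⟨H.b, ?_⟩
      rintro x ⟨G, hG, rfl⟩
      exact ((hIoo G hG).2.1.trans (hIoo G hG).2.2.2).le
    have hbdd2 : BddBelow (sSup '' c) := by
      refine ⟨H.a, ?_⟩
      rintro x ⟨G, hG, rfl⟩
      exact ((hIoo G hG).2.2.1.trans (hIoo G hG).2.1).le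
    set L := sSup (sInf '' c) with hL
    set R := sInf (sSup '' c) with hR
    have hcross : ∀ G ∈ c, ∀ G' ∈ c, sInf G < sSup G' := by
      intro G hG G' hG'
      by_cases hGG' : G = G'
      · rw [hGG']; exact (hIoo G' hG').2.1
      rcases hchain hG hG' hGG' with h | h
      · have hss : Set.Ioo (sInf G) (sSup G) ⊆ Set.Ioo (sInf G') (sSup G') := by
          rw [← (hIoo G hG).1, ← (hIoo G' hG').1]; exact h
        have h2 := (Set.Ioo_subset_Ioo_iff (hIoo G hG).2.1).mp hss
        exact lt_of_lt_of_le (hIoo G hG).2.1 h2.2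
      · have hss : Set.Ioo (sInf G') (sSup G') ⊆ Set.Ioo (sInf G) (sSup G) := by
          rw [← (hIoo G hG).1, ← (hIoo G' hG').1]; exact h
        have h2 := (Set.Ioo_subset_Ioo_iff (hIoo G' hG').2.1).mp hss
        exact lt_of_le_of_lt h2.1 (hIoo G' hG').2.1
    have hLR : L ≤ R := by
      apply csSup_le hne1
      rintro x ⟨G, hG, rfl⟩
      apply le_csInf hne2
      rintro y ⟨G', hG', rfl⟩
      exact (hcross G hG G' hG').le
    have hkey : ∀ G ∈ c, sInf G < L ∧ R < sSup G := by
      intro G hG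
      obtain ⟨G', hG'c, hnsub⟩ := hleast G hG
      have hGne : G ≠ G' := fun he => hnsub (he ▸ subset_rfl)
      have hsub : G' ⊆ G := by
        rcases hchain hG hG'c hGne with h | h
        · exact absurd h hnsub
        · exact h
      obtain ⟨t, u, v, ht1, ht2, hu, hv, huv, hgap, hGeq⟩ := hdata G hG
      obtain ⟨t', u', v', ht1', ht2', hu', hv', huv', hgap', hG'eq⟩ := hdata G' hG'c
      rw [hGeq, hG'eq] at hsub hGne
      have hsub2 := (Set.Ioo_subset_Ioo_iff huv').mp hsub
      have hstrict : u < u' ∧ v' < v := by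
        rcases eq_or_lt_of_le hsub2.1 with he | hlt
        · exfalso
          have hv'v : v' < v := by
            rcases eq_or_lt_of_le hsub2.2 with he2 | h2
            · exact absurd (by rw [← he, he2]) hGne
            · exact h2
          have hKK : Kr H t' = Kr H t := by
            have h1 := H.Kr_eq_of_mem ht1' ht2' hu'
            have h2 := H.Kr_eq_of_mem ht1 ht2 hu
            rw [← h1, ← he]; exact h2
          have hmem : v' ∈ Set.Ioo u v ∩ Kr H t :=
            ⟨⟨by rw [he]; exact huv', hv'v⟩, hKK ▸ hv'⟩
          rw [hgap] at hmem
          exact hmem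
        · refine ⟨hlt, ?_⟩
          rcases eq_or_lt_of_le hsub2.2 with he2 | h2
          · exfalso
            have hKK : Kr H t' = Kr H t := by
              have h1 := H.Kr_eq_of_mem ht1' ht2' hv'
              have h2 := H.Kr_eq_of_mem ht1 ht2 hv
              rw [← h1, he2]; exact h2
            have hmem : u' ∈ Set.Ioo u v ∩ Kr H t :=
              ⟨⟨hlt, lt_of_lt_of_le huv' hsub2.2⟩, hKK ▸ hu'⟩
            rw [hgap] at hmem
            exact hmem
          · exact h2
      constructor
      · have h1 : sInf G = u := by rw [hGeq, csInf_Ioo huv]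
        have h2 : sInf G' = u' := by rw [hG'eq, csInf_Ioo huv']
        calc sInf G = u := h1
          _ < u' := hstrict.1
          _ = sInf G' := h2.symm
          _ ≤ L := le_csSup hbdd1 ⟨G', hG'c, rfl⟩
      · have h1 : sSup G = v := by rw [hGeq, csSup_Ioo huv]
        have h2 : sSup G' = v' := by rw [hG'eq, csSup_Ioo huv']
        calc R ≤ sSup G' := csInf_le hbdd2 ⟨G', hG'c, rfl⟩
          _ = v' := h2
          _ < v := hstrict.2
          _ = sSup G := h1.symm
    have hwmem : ∀ G ∈ c, L ∈ G := by
      intro G hG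
      have h1 := (hIoo G hG).1
      rw [h1]
      exact ⟨(hkey G hG).1, lt_of_le_of_lt hLR (hkey G hG).2⟩
    obtain ⟨G₁, hG₁⟩ := hcne
    have hwab : L ∈ Set.Ioo H.a H.b := hG_sub G₁ (hcS hG₁) (hwmem G₁ hG₁)
    obtain ⟨u', v', hu', hv', huv', hgap', hG'S⟩ := hgapS L hwab.1 hwab.2
    refine ⟨Set.Ioo u' v', hG'S, ?_⟩
    intro G hG
    have hKsub : Kr H L ⊆ G := hclass_sub G (hcS hG) L (hwmem G hG)
    have h1 := (hIoo G hG).1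
    rw [h1]
    have h2 : u' ∈ Set.Ioo (sInf G) (sSup G) := by rw [← h1]; exact hKsub hu'
    have h3 : v' ∈ Set.Ioo (sInf G) (sSup G) := by rw [← h1]; exact hKsub hv'
    exact Set.Ioo_subset_Ioo h2.1.le h3.2.le
  obtain ⟨m, hm⟩ := zorn_superset S hchains
  obtain ⟨t, u, v, ht1, ht2, hu, hv, huv, hgap, rfl⟩ := hm.1
  have hwmem : (u + v)/2 ∈ Set.Ioo u v := ⟨by linarith, by linarith⟩
  have hwa : H.a < (u + v)/2 := lt_trans hu.1 hwmem.1
  have hwb : (u + v)/2 < H.b := lt_trans hwmem.2 hv.2.1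
  obtain ⟨u', v', hu', hv', huv', hgap', hG'S⟩ := hgapS _ hwa hwb
  have hKsub : Kr H ((u + v)/2) ⊆ Set.Ioo u v :=
    H.class_subset_gap ht1 ht2 hu hv hgap hwmem
  have hsub : Set.Ioo u' v' ⊆ Set.Ioo u v :=
    Set.Ioo_subset_Ioo (hKsub hu').1.le (hKsub hv').2.le
  have hmin := hm.2 hG'S hsub
  exact absurd (hmin (hKsub hu')).1 (lt_irrefl u')

end Hyp
end ConicAux
namespace ConicAux

lemma enat_ge4 {x : ℕ∞} (hx : 6 ≤ 2 + x) : 4 ≤ x := by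
  cases x with
  | top => exact le_top
  | coe n =>
    have : (6:ℕ) ≤ 2 + n := by exact_mod_cast hx
    exact_mod_cast (by omega : 4 ≤ n)

namespace Hyp

variable (H : Hyp)

lemma exists_good : ∃ c, H.a < c ∧ c < H.b ∧ (Kr H c).OrdConnected ∧
    4 ≤ H.f (pr H.a) (pr c) (pr c) := by
  obtain ⟨c₁, h1, h2, hord⟩ := H.exists_ordConnected
  by_cases hsing : ∀ x ∈ Kr H c₁, x = c₁
  · refine ⟨c₁, h1, h2, hord, ?_⟩
    obtain ⟨s, hs⟩ := H.hf.total_six (pr H.a) (pr c₁) (H.dom_ax ⟨h1.le, h2.le⟩)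
    have hsub : ∀ r ∈ s, H.f (pr H.a) (pr c₁) r ≠ 0 →
        r ∈ ({pr H.a, pr c₁} : Finset S1) := by
      intro r _ hr
      rcases H.supp_rep h1 h2 hr with rfl | ⟨x, hx1, hx2, rfl⟩
      · exact Finset.mem_insert_self _ _
      · have hx : x ∈ Kr H c₁ := ⟨hx1, hx2, hr⟩
        rw [hsing x hx]
        exact Finset.mem_insert_of_mem (Finset.mem_singleton_self _)
    have hle : ∑ r ∈ s, H.f (pr H.a) (pr c₁) r ≤
        ∑ r ∈ ({pr H.a, pr c₁} : Finset S1), H.f (pr H.a) (pr c₁) r :=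
      Finset.sum_le_sum_of_ne_zero hsub
    rw [Finset.sum_pair (H.pr_a_ne h1 h2), H.fata_two h1 h2] at hle
    exact enat_ge4 (le_trans hs hle)
  · push_neg at hsing
    obtain ⟨d, hd, hdc⟩ := hsing
    have hcc : c₁ ∈ Kr H c₁ := H.Kr_self h1 h2
    have huK : min d c₁ ∈ Kr H c₁ := by
      rcases le_total d c₁ with h | h
      · rwa [min_eq_left h]
      · rwa [min_eq_right h]
    have hvK : max d c₁ ∈ Kr H c₁ := by
      rcases le_total d c₁ with h | h
      · rwa [max_eq_right h]
      · rwa [max_eq_left h]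
    set u := min d c₁ with hu
    set v := max d c₁ with hv
    have huv : u < v := min_lt_max.mpr hdc
    have hva : H.a < v := hvK.1
    have hvb : v < H.b := hvK.2.1
    have hKv : Kr H v = Kr H c₁ := H.Kr_eq_of_mem h1 h2 hvK
    refine ⟨v, hva, hvb, by rw [hKv]; exact hord, ?_⟩
    set xseq : ℕ → ℝ := fun n => v - (v - u)/(n + 2) with hX
    have hxmem : ∀ n, xseq n ∈ Set.Icc u v := by
      intro n
      have h0 : (0:ℝ) ≤ (n:ℝ) := Nat.cast_nonneg n
      have hvu : (0:ℝ) < v - u := by linarith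
      constructor
      · have hd2 : (v - u)/(n+2) ≤ v - u := div_le_self hvu.le (by linarith)
        simp only [hX]; linarith
      · have hd2 : 0 < (v - u)/(n+2) := div_pos hvu (by linarith)
        simp only [hX]; linarith
    have hxK : ∀ n, xseq n ∈ Kr H v := by
      intro n
      rw [hKv]
      exact hord.out huK hvK (hxmem n)
    have hxne : ∀ n, xseq n ≠ v := by
      intro n
      have h0 : (0:ℝ) ≤ (n:ℝ) := Nat.cast_nonneg n
      have hvu : (0:ℝ) < v - u := by linarith
      have hd2 : 0 < (v - u)/(n+2) := div_pos hvu (by linarith)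
      simp only [hX]
      intro he
      linarith [he]
    have hxtend : Tendsto xseq atTop (nhds v) := by
      have hden : Tendsto (fun n : ℕ => ((n:ℝ)+2)) atTop atTop :=
        tendsto_atTop_add_const_right _ _ tendsto_natCast_atTop_atTop
      have h2' : Tendsto (fun n : ℕ => (v - u)/((n:ℝ)+2)) atTop (nhds 0) :=
        Tendsto.div_atTop tendsto_const_nhds hden
      simpa using tendsto_const_nhds.sub h2'
    have hdomv := H.dom_ax (⟨hva.le, hvb.le⟩ : v ∈ Set.Icc H.a H.b)
    have hptend : Tendsto (fun n => pr (xseq n)) atTop (nhds (pr v)) :=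
      (pr_continuous.tendsto v).comp hxtend
    have key := H.hf.limit_mult (fun _ => pr H.a) (fun _ => pr v) (fun _ => pr v)
      (fun n => pr (xseq n)) (pr H.a) (pr v) (pr v) 2 2 (fun _ => hdomv) hdomv
      tendsto_const_nhds tendsto_const_nhds
      (fun _ => ⟨H.mem_closureI ⟨hva.le, hvb.le⟩, (H.hf.self_mem _ _ hdomv).2⟩)
      (fun n => ⟨H.mem_closureI ⟨(hxK n).1.le, (hxK n).2.1.le⟩, (hxK n).2.2⟩)
      (H.mem_closureI ⟨hva.le, hvb.le⟩) tendsto_const_nhds hptend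
      (fun _ => by simpa using H.two_le hdomv (H.hf.self_mem _ _ hdomv).2)
      (fun n => by simpa using H.two_le hdomv (hxK n).2.2)
    have hlt := key.2 (fun n =>
      pr_ne (H.mem_window hva.le hvb) (H.mem_window (hxK n).1.le (hxK n).2.1)
        (Ne.symm (hxne n)))
    refine H.four_le hdomv ?_
    calc (2:ℕ∞) = ((max 2 2 : ℕ) : ℕ∞) := by norm_num
    _ < _ := hlt

end Hyp
end ConicAux

/-- If `f_{a,a} = f_{a,b}` and `F_{a,b}` misses `(a,b)`, then there is
`c ∈ (a,b)` with `f_{a,c} = f_{c,c}`, support of `f_{c,c}` in `[a,b)`, `a`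
isolated in `F_{a,c}`, and `F_{a,c}` having exactly two components. -/
theorem conicSystem_exists_diag_point
    (a b : ℝ) (hab : a < b) (hb1 : b < a + 1)
    (I : Set S1) (hI : I = arcCC a b ∨ I = arcCO a b)
    (f : S1 → S1 → S1 → ℕ∞)
    (hf : IsIntrinsicConicSystem I f)
    (heq : f (pr a) (pr a) = f (pr a) (pr b))
    (hdisj : suppF f (pr a) (pr b) ∩ arcOO a b = ∅) :
    ∃ c : ℝ, a < c ∧ c < b ∧
      f (pr a) (pr c) = f (pr c) (pr c) ∧
      suppF f (pr c) (pr c) ⊆ arcCO a b ∧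
      IsolatedIn (pr a) (suppF f (pr a) (pr c)) ∧
      TwoComponents (suppF f (pr a) (pr c)) := by
  classical
  set H : ConicAux.Hyp := ⟨a, b, hab, hb1, I, hI, f, hf, heq, hdisj⟩ with hH
  obtain ⟨c, hc1, hc2, hord, h4⟩ := H.exists_good
  have hdomc : (pr a, pr c) ∈ ConicDom I := H.dom_ax ⟨hc1.le, hc2.le⟩
  have hcI : pr c ∈ I := H.memI_Ico ⟨hc1.le, hc2⟩
  have hfd : f (pr c) (pr c) = f (pr a) (pr c) :=
    hf.eq_diag (pr a) (pr c) (pr c) hdomc h4 hcI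
  refine ⟨c, hc1, hc2, hfd.symm, ?_, H.isolated_a hc1 hc2, ?_⟩
  · -- support of f_{c,c} is contained in [a,b)
    intro r hr
    have hr' : f (pr a) (pr c) r ≠ 0 := by
      have hr2 : f (pr c) (pr c) r ≠ 0 := hr
      rwa [hfd] at hr2
    rcases H.supp_rep hc1 hc2 hr' with rfl | ⟨x, hx1, hx2, rfl⟩
    · exact ⟨a, ⟨le_rfl, hab⟩, rfl⟩
    · exact ⟨x, ⟨hx1.le, hx2⟩, rfl⟩
  · -- F_{a,c} has exactly two connected components
    set F := suppF f (pr a) (pr c) with hF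
    have haF : pr a ∈ F := (hf.self_mem _ _ hdomc).1
    have hcF : pr c ∈ F := (hf.self_mem _ _ hdomc).2
    have hanec : pr a ≠ pr c := H.pr_a_ne hc1 hc2
    set D := pr '' (ConicAux.Kr H c) with hD
    have hDF : D ⊆ F := by rintro r ⟨x, hx, rfl⟩; exact hx.2.2
    have hcD : pr c ∈ D := ⟨c, H.Kr_self hc1 hc2, rfl⟩
    have hDpre : IsPreconnected D :=
      (hord.isPreconnected).image pr (ConicAux.pr_continuous.continuousOn)
    have hclassify : ∀ z ∈ F, z = pr a ∨ z ∈ D := by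
      intro z hz
      rcases H.supp_rep hc1 hc2 hz with h | ⟨x, hx1, hx2, rfl⟩
      · exact Or.inl h
      · exact Or.inr ⟨x, ⟨hx1, hx2, hz⟩, rfl⟩
    obtain ⟨U, hUo, haU, hUF⟩ := H.isolated_a hc1 hc2
    have hcompa : connectedComponentIn F (pr a) = {pr a} := by
      apply Set.eq_singleton_iff_unique_mem.mpr
      refine ⟨mem_connectedComponentIn haF, ?_⟩
      intro z hz
      by_contra hzx
      have hC := isPreconnected_connectedComponentIn (x := pr a) (F := F)
      have hsub : connectedComponentIn F (pr a) ⊆ U ∪ {pr a}ᶜ := by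
        intro y hy
        by_cases hyx : y = pr a
        · exact Or.inl (hyx ▸ haU)
        · exact Or.inr hyx
      obtain ⟨y, hyC, hyU, hyx⟩ := hC U {pr a}ᶜ hUo isOpen_compl_singleton hsub
        ⟨pr a, mem_connectedComponentIn haF, haU⟩ ⟨z, hz, hzx⟩
      have hymem : y ∈ U ∩ F := ⟨hyU, connectedComponentIn_subset F (pr a) hyC⟩
      rw [hUF] at hymem
      exact hyx hymem
    have hcompD : ∀ z ∈ D,
        connectedComponentIn F z = connectedComponentIn F (pr c) := by
      intro z hzD
      have hsubz : D ⊆ connectedComponentIn F z :=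
        hDpre.subset_connectedComponentIn hzD hDF
      exact connectedComponentIn_eq (hsubz hcD)
    refine ⟨pr a, haF, pr c, hcF, ?_, ?_⟩
    · intro hcontra
      have hmem : pr c ∈ connectedComponentIn F (pr a) := by
        rw [hcontra]; exact mem_connectedComponentIn hcF
      rw [hcompa] at hmem
      exact hanec hmem.symm
    · intro z hz
      rcases hclassify z hz with rfl | hzD
      · exact Or.inl rfl
      · exact Or.inr (hcompD z hzD)
end
end
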